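/- arXiv:1408.0847 — 10 statements merged into one kernel-verified Lean document; each statement's English description precedes it below -/
import Mathlib

section
/- Under the standing assumptions on f̃, the function Ψ is finite-valued and there exists a unique a̲ ∈ ℝ with a̲ < ā such that Ψ(a̲) = 0; moreover Ψ(x) < 0 for every x < a̲ and Ψ(x) > 0 for every x > a̲. -/
open MeasureTheory Filter Set

/-- `Ψ(s) = ∫_s^∞ e^{-Φ(y-s)} f̃'(y) dy`, where `g` plays the role of `f̃'`. -/
noncomputable def Psi (Φ : ℝ) (g : ℝ → ℝ) (s : ℝ) : ℝ :=
  ∫ y in Set.Ioi s, Real.exp (-(Φ * (y - s))) * g y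

/-!
Integrating by parts, `Ψ(s) = Φ · H(s)` with `H(s) = ∫₀^∞ e^{-Φt} (f̃(s+t) - f̃(s)) dt`
(`discountedIncrement`).
For `s ≤ ā` the increments `f̃(s+t) - f̃(s)` are nondecreasing in `s` (convexity to the left
of `ā`, monotonicity to the right), strictly so once `s + t > ā`; hence `H` is strictly
increasing on `(-∞, ā]`, and it is positive on `[ā, ∞)` where `f̃` increases. For `s` far to
the left the increments are nonpositive for `t ≤ ā - s` and at most `f̃(ā-1) - f̃(ā-2) < 0`
for `t ∈ [1, 2]`, while for `t > ā - s` the integrand is dominated by an integrable function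
independent of `s`; so `H` takes a negative value. Continuity of `H` and the intermediate
value theorem give the zero, unique by strict monotonicity.
-/

open Real Topology

lemma norm_exp_mul (x y : ℝ) : ‖exp x * y‖ = exp x * |y| := by
  rw [norm_mul, Real.norm_of_nonneg (exp_pos x).le, Real.norm_eq_abs]

lemma tendsto_exp_neg_mul_mul_add_abs_pow {b : ℝ} (hb : 0 < b) (B : ℝ) (n : ℕ) :
    Tendsto (fun t => exp (-(b * t)) * (B + |t|) ^ n) atTop (𝓝 0) := by
  have h := ((tendsto_rpow_mul_exp_neg_mul_atTop_nhds_zero n b hb).comp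
    (tendsto_atTop_add_const_left atTop B tendsto_id)).const_mul (exp (b * B))
  rw [mul_zero] at h
  refine h.congr' ?_
  filter_upwards [eventually_ge_atTop 0] with t ht
  rw [Function.comp_apply, id, Real.rpow_natCast, abs_of_nonneg ht,
    show -b * (B + t) = -(b * B) + -(b * t) by ring, exp_add, exp_neg (b * B)]
  field_simp

lemma integrableOn_exp_neg_mul_mul_add_abs_pow {b : ℝ} (hb : 0 < b) (B : ℝ) (n : ℕ) (a : ℝ) :
    IntegrableOn (fun t => exp (-(b * t)) * (B + |t|) ^ n) (Ioi a) := by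
  refine integrable_of_isBigO_exp_neg (half_pos hb) (by fun_prop) ?_
  have hbdd := (tendsto_exp_neg_mul_mul_add_abs_pow (half_pos hb) B n).isBigO_one ℝ
  refine ((Asymptotics.isBigO_refl (fun t => exp (-(b / 2) * t)) atTop).mul hbdd).congr
    (fun t => ?_) (fun t => mul_one _)
  rw [← mul_assoc, ← exp_add]
  ring_nf

lemma integrableOn_exp_mul_of_abs_le {b : ℝ} (hb : 0 < b) (c : ℝ) {F : ℝ → ℝ} {a B C : ℝ}
    {n : ℕ} (hF : AEStronglyMeasurable F (volume.restrict (Ioi a)))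
    (hFC : ∀ y, |F y| ≤ C * (B + |y|) ^ n) :
    IntegrableOn (fun y => exp (-(b * (y - c))) * F y) (Ioi a) := by
  refine ((integrableOn_exp_neg_mul_mul_add_abs_pow hb B n a).const_mul (exp (b * c) * C)).mono'
    ((by fun_prop : Continuous fun y => exp (-(b * (y - c)))).aestronglyMeasurable.mul hF)
    (Eventually.of_forall fun y => ?_)
  calc ‖exp (-(b * (y - c))) * F y‖ = exp (-(b * (y - c))) * |F y| := norm_exp_mul _ _
    _ ≤ exp (-(b * (y - c))) * (C * (B + |y|) ^ n) := by gcongr; exact hFC y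
    _ = exp (b * c) * C * (exp (-(b * y)) * (B + |y|) ^ n) := by
        rw [show -(b * (y - c)) = b * c + -(b * y) by ring, exp_add]
        ring

lemma abs_sub_le_of_abs_le_mul_pow {f : ℝ → ℝ} {C : ℝ} {n : ℕ}
    (hfC : ∀ x, |f x| ≤ C * (1 + |x|) ^ n) {x y R : ℝ} (hx : |x| ≤ R) (hy : |y| ≤ R) :
    |f x - f y| ≤ 2 * C * (1 + R) ^ n := by
  have hC : 0 ≤ C := by simpa using (abs_nonneg _).trans (hfC 0)
  have hbound : ∀ z, |z| ≤ R → |f z| ≤ C * (1 + R) ^ n := fun z hz =>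
    (hfC z).trans (by gcongr)
  linarith [abs_sub (f x) (f y), hbound x hx, hbound y hy]

lemma tendsto_setIntegral_Ioi_atTop {E : Type*} [NormedAddCommGroup E] [NormedSpace ℝ E]
    {k : ℝ → E} {a : ℝ} (hk : IntegrableOn k (Ioi a)) :
    Tendsto (fun r => ∫ t in Ioi r, k t) atTop (𝓝 0) := by
  have h := tendsto_setIntegral_of_antitone (μ := volume) (fun r => measurableSet_Ioi)
    (fun r r' hrr' => Ioi_subset_Ioi hrr') ⟨a, hk⟩
  have hempty : ⋂ r : ℝ, Ioi r = ∅ :=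
    eq_empty_of_forall_notMem fun x hx => lt_irrefl x (mem_iInter.1 hx x)
  rwa [hempty, Measure.restrict_empty, integral_zero_measure] at h

lemma setIntegral_Ioi_pos {φ : ℝ → ℝ} {a T : ℝ} (hφ : IntegrableOn φ (Ioi a))
    (hnonneg : ∀ t ∈ Ioi a, 0 ≤ φ t) (hpos : ∀ t ∈ Ioi T, 0 < φ t) :
    0 < ∫ t in Ioi a, φ t := by
  rw [setIntegral_pos_iff_support_of_nonneg_ae
    ((ae_restrict_iff' measurableSet_Ioi).2 (Eventually.of_forall hnonneg)) hφ]
  have hsub : Ioi (max a T) ⊆ Function.support φ ∩ Ioi a := fun t ht =>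
    ⟨(hpos t (mem_Ioi.2 ((le_max_right _ _).trans_lt ht))).ne',
      mem_Ioi.2 ((le_max_left _ _).trans_lt ht)⟩
  calc (0 : ENNReal) < volume (Ioi (max a T)) := by simp
    _ ≤ _ := measure_mono hsub

section ImproperIntegrals

variable {E : Type*} [NormedAddCommGroup E] [NormedSpace ℝ E]

theorem integral_Ioi_of_hasDerivAt_off_countable_of_tendsto [CompleteSpace E] {f f' : ℝ → E}
    {a : ℝ} {m : E} {D : Set ℝ} (hD : D.Countable) (hcont : ContinuousOn f (Ici a))
    (hderiv : ∀ x ∈ Ioi a \ D, HasDerivAt f (f' x) x) (hf' : IntegrableOn f' (Ioi a))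
    (hf : Tendsto f atTop (𝓝 m)) : ∫ x in Ioi a, f' x = m - f a := by
  refine tendsto_nhds_unique (intervalIntegral_tendsto_integral_Ioi a hf' tendsto_id)
    ((hf.sub_const (f a)).congr' ?_)
  filter_upwards [eventually_ge_atTop a] with x hx
  exact (integral_eq_of_hasDerivAt_off_countable_of_le f f' hx hD
    (hcont.mono Icc_subset_Ici_self) (fun y hy => hderiv y ⟨hy.1.1, hy.2⟩)
    ((intervalIntegrable_iff_integrableOn_Ioc_of_le hx).2
      (hf'.mono_set Ioc_subset_Ioi_self))).symm

theorem integral_Ioi_eq_integral_Ioi_zero_add (F : ℝ → E) (s : ℝ) :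
    ∫ y in Ioi s, F y = ∫ t in Ioi 0, F (s + t) := by
  have h := (measurePreserving_add_left volume s).setIntegral_preimage_emb
    (measurableEmbedding_addLeft s) F (Ioi s)
  rw [preimage_const_add_Ioi, sub_self] at h
  exact h.symm

end ImproperIntegrals

section Valley

variable {f : ℝ → ℝ} {A : ℝ}

lemma StrictMonoOn.Ici_of_continuous (hf : StrictMonoOn f (Ioi A)) (hc : Continuous f) :
    StrictMonoOn f (Ici A) := by
  intro x hx y hy hxy
  rcases (mem_Ici.1 hx).eq_or_lt with rfl | hAx
  · have hm : A < (A + y) / 2 := by linarith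
    calc f A ≤ f ((A + y) / 2) :=
          le_of_tendsto ((hc.tendsto A).mono_left nhdsWithin_le_nhds)
            (eventually_of_mem (Ioo_mem_nhdsGT hm) fun z hz =>
              (hf hz.1 (mem_Ioi.2 hm) hz.2).le)
      _ < f y := hf (mem_Ioi.2 hm) (mem_Ioi.2 (by linarith)) (by linarith)
  · exact hf hAx (hAx.trans hxy) hxy

lemma StrictAntiOn.Iic_of_continuous (hf : StrictAntiOn f (Iio A)) (hc : Continuous f) :
    StrictAntiOn f (Iic A) := by
  intro x hx y hy hxy
  rcases (mem_Iic.1 hy).eq_or_lt with rfl | hyA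
  · have hm : (x + y) / 2 < y := by linarith
    calc f y ≤ f ((x + y) / 2) :=
          le_of_tendsto ((hc.tendsto y).mono_left nhdsWithin_le_nhds)
            (eventually_of_mem (Ioo_mem_nhdsLT hm) fun z hz =>
              (hf (mem_Iio.2 hm) hz.2 hz.1).le)
      _ < f x := hf (mem_Iio.2 (by linarith)) (mem_Iio.2 hm) (by linarith)
  · exact hf (hxy.trans hyA) hyA hxy

lemma ConvexOn.Iic_of_continuous (hf : ConvexOn ℝ (Iio A) f) (hc : Continuous f) :
    ConvexOn ℝ (Iic A) f := by
  refine ⟨convex_Iic A, fun x hx y hy a b ha hb hab => ?_⟩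
  have hshift : ∀ z, Tendsto (fun ε => f (z - ε)) (𝓝[>] 0) (𝓝 (f z)) := fun z =>
    (hc.tendsto z).comp (((continuous_const.sub continuous_id).tendsto' 0 z
      (sub_zero z)).mono_left nhdsWithin_le_nhds)
  refine le_of_tendsto_of_tendsto (hshift _)
    (((hshift x).const_smul a).add ((hshift y).const_smul b)) ?_
  filter_upwards [self_mem_nhdsWithin] with ε (hε : 0 < ε)
  have h := hf.2 (x := x - ε) (by simp only [mem_Iio]; linarith [mem_Iic.1 hx])
    (y := y - ε) (by simp only [mem_Iio]; linarith [mem_Iic.1 hy]) ha hb hab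
  convert h using 2
  simp only [smul_eq_mul]
  linear_combination ε * hab

lemma ConvexOn.map_add_sub_le_map_add_sub {s : Set ℝ} (hf : ConvexOn ℝ s f) {a b t : ℝ}
    (ha : a ∈ s) (hbt : b + t ∈ s) (hab : a ≤ b) (ht : 0 ≤ t) :
    f (a + t) - f a ≤ f (b + t) - f b := by
  rcases ht.eq_or_lt with rfl | ht
  · simp
  have hmem : ∀ z ∈ Icc a (b + t), z ∈ s := fun z hz =>
    hf.1.ordConnected.out ha hbt hz
  have h₁ : slope f a (a + t) ≤ slope f a (b + t) :=
    hf.slope_mono ha ⟨hmem _ ⟨by linarith, by linarith⟩, by simp; linarith⟩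
      ⟨hbt, by simp; linarith⟩ (by linarith)
  have h₂ : slope f (b + t) a ≤ slope f (b + t) b :=
    hf.slope_mono hbt ⟨ha, by simp; linarith⟩
      ⟨hmem _ ⟨hab, by linarith⟩, by simp; linarith⟩ hab
  rw [slope_comm f (b + t) a, slope_comm f (b + t) b] at h₂
  simp only [slope_def_field, add_sub_cancel_left] at h₁ h₂
  exact (div_le_div_iff_of_pos_right ht).1 (h₁.trans h₂)

section Valley

variable {f : ℝ → ℝ} {A : ℝ}

lemma map_add_sub_le_map_add_sub_of_valley (hconv : ConvexOn ℝ (Iic A) f)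
    (hanti : AntitoneOn f (Iic A)) (hmono : MonotoneOn f (Ici A)) {a b t : ℝ} (hab : a ≤ b)
    (hbA : b ≤ A) (ht : 0 ≤ t) : f (a + t) - f a ≤ f (b + t) - f b := by
  rcases le_or_gt (b + t) A with hbt | hbt
  · exact hconv.map_add_sub_le_map_add_sub (mem_Iic.2 (hab.trans hbA)) hbt hab ht
  rcases le_or_gt A (a + t) with hat | hat
  · have h₁ := hmono (mem_Ici.2 hat) (mem_Ici.2 hbt.le) (by linarith)
    have h₂ := hanti (mem_Iic.2 (hab.trans hbA)) (mem_Iic.2 hbA) hab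
    linarith
  · -- compare with the increment starting at `A - t`, which ends exactly at `A`
    have h₁ := hconv.map_add_sub_le_map_add_sub (b := A - t) (mem_Iic.2 (hab.trans hbA))
      (by simp) (by linarith) ht
    have h₂ := hmono (mem_Ici.2 le_rfl) (mem_Ici.2 hbt.le) hbt.le
    have h₃ : f b ≤ f (A - t) := hanti (mem_Iic.2 (by linarith)) (mem_Iic.2 hbA) (by linarith)
    rw [sub_add_cancel] at h₁
    linarith

end Valley

theorem psi_eq_mul_integral_Ioi {Φ : ℝ} (hΦ : 0 < Φ) {f g : ℝ → ℝ} {D : Set ℝ}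
    (hD : D.Countable) (hfg : ∀ x ∉ D, HasDerivAt f (g x) x) (hf : Continuous f)
    (hg : Measurable g) {Cf Cg : ℝ} {nf ng : ℕ} (hfC : ∀ x, |f x| ≤ Cf * (1 + |x|) ^ nf)
    (hgC : ∀ x, |g x| ≤ Cg * (1 + |x|) ^ ng) (s : ℝ) :
    Psi Φ g s = Φ * ∫ y in Ioi s, exp (-(Φ * (y - s))) * (f y - f s) := by
  set W : ℝ → ℝ := fun y => exp (-(Φ * (y - s))) * (f y - f s) with hW
  have hWC : ∀ y, |f y - f s| ≤ 2 * Cf * ((1 + |s|) + |y|) ^ nf := fun y =>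
    (abs_sub_le_of_abs_le_mul_pow hfC (R := |s| + |y|) (by linarith [abs_nonneg s])
      (by linarith [abs_nonneg y])).trans_eq (by ring)
  have hWint : IntegrableOn W (Ioi s) :=
    integrableOn_exp_mul_of_abs_le hΦ s (by fun_prop : Continuous _).aestronglyMeasurable hWC
  have hgint : IntegrableOn (fun y => exp (-(Φ * (y - s))) * g y) (Ioi s) :=
    integrableOn_exp_mul_of_abs_le hΦ s hg.aestronglyMeasurable hgC
  have hderiv : ∀ y ∈ Ioi s \ D,
      HasDerivAt W (exp (-(Φ * (y - s))) * g y - Φ * W y) y := by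
    intro y hy
    have hexp : HasDerivAt (fun y => exp (-(Φ * (y - s)))) (exp (-(Φ * (y - s))) * -Φ) y := by
      simpa using (((hasDerivAt_id y).sub_const s).const_mul Φ).neg.exp
    exact (hexp.mul ((hfg y hy.2).sub_const (f s))).congr_deriv (by ring)
  have hlim : Tendsto W atTop (𝓝 0) := by
    have hdecay := (tendsto_exp_neg_mul_mul_add_abs_pow hΦ (1 + |s|) nf).const_mul
      (exp (Φ * s) * (2 * Cf))
    rw [mul_zero] at hdecay
    refine squeeze_zero_norm (fun y => ?_) hdecay
    calc ‖W y‖ = exp (-(Φ * (y - s))) * |f y - f s| := norm_exp_mul _ _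
      _ ≤ exp (-(Φ * (y - s))) * (2 * Cf * ((1 + |s|) + |y|) ^ nf) := by gcongr; exact hWC y
      _ = _ := by
          rw [show -(Φ * (y - s)) = Φ * s + -(Φ * y) by ring, exp_add]
          ring
  have hFTC := integral_Ioi_of_hasDerivAt_off_countable_of_tendsto hD
    (by fun_prop : Continuous W).continuousOn hderiv (hgint.sub (hWint.const_mul Φ)) hlim
  rw [integral_sub hgint (hWint.const_mul Φ), integral_const_mul] at hFTC
  simp only [hW, sub_self, mul_zero] at hFTC
  rw [Psi]
  linarith

noncomputable def discountedIncrement (Φ : ℝ) (f : ℝ → ℝ) (s : ℝ) : ℝ :=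
  ∫ t in Ioi 0, exp (-(Φ * t)) * (f (s + t) - f s)

theorem psi_eq_mul_discountedIncrement {Φ : ℝ} (hΦ : 0 < Φ) {f g : ℝ → ℝ} {D : Set ℝ}
    (hD : D.Countable) (hfg : ∀ x ∉ D, HasDerivAt f (g x) x) (hf : Continuous f)
    (hg : Measurable g) {Cf Cg : ℝ} {nf ng : ℕ} (hfC : ∀ x, |f x| ≤ Cf * (1 + |x|) ^ nf)
    (hgC : ∀ x, |g x| ≤ Cg * (1 + |x|) ^ ng) (s : ℝ) :
    Psi Φ g s = Φ * discountedIncrement Φ f s := by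
  rw [psi_eq_mul_integral_Ioi hΦ hD hfg hf hg hfC hgC, integral_Ioi_eq_integral_Ioi_zero_add]
  simp only [add_sub_cancel_left, discountedIncrement]

section DiscountedIncrement

variable {Φ C A : ℝ} {n : ℕ} {f : ℝ → ℝ}

lemma integrableOn_discountedIncrement_integrand (hΦ : 0 < Φ) (hf : Continuous f)
    (hfC : ∀ x, |f x| ≤ C * (1 + |x|) ^ n) (s : ℝ) :
    IntegrableOn (fun t => exp (-(Φ * t)) * (f (s + t) - f s)) (Ioi 0) := by
  simpa using integrableOn_exp_mul_of_abs_le hΦ 0 (F := fun t => f (s + t) - f s)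
    (B := 1 + |s|) (C := 2 * C)
    (by fun_prop : Continuous _).aestronglyMeasurable fun t =>
      (abs_sub_le_of_abs_le_mul_pow hfC (R := |s| + |t|) (abs_add_le s t)
        (by linarith [abs_nonneg t])).trans_eq (by ring)

theorem continuous_discountedIncrement (hΦ : 0 < Φ) (hf : Continuous f)
    (hfC : ∀ x, |f x| ≤ C * (1 + |x|) ^ n) : Continuous (discountedIncrement Φ f) := by
  refine continuous_iff_continuousAt.2 fun s₀ => continuousAt_of_dominated
    (bound := fun t => 2 * C * (exp (-(Φ * t)) * ((2 + |s₀|) + |t|) ^ n))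
    (Eventually.of_forall fun s => (by fun_prop :
      Continuous fun t => exp (-(Φ * t)) * (f (s + t) - f s)).aestronglyMeasurable) ?_
    ((integrableOn_exp_neg_mul_mul_add_abs_pow hΦ _ n 0).const_mul _)
    (Eventually.of_forall fun t => by fun_prop)
  filter_upwards [Metric.closedBall_mem_nhds s₀ one_pos] with s hs
  have hs' : |s| ≤ 1 + |s₀| := by
    rw [Metric.mem_closedBall, Real.dist_eq] at hs
    linarith [abs_sub_abs_le_abs_sub s s₀]
  refine Eventually.of_forall fun t => ?_
  calc ‖exp (-(Φ * t)) * (f (s + t) - f s)‖ = exp (-(Φ * t)) * |f (s + t) - f s| :=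
        norm_exp_mul _ _
    _ ≤ exp (-(Φ * t)) * (2 * C * (1 + ((1 + |s₀|) + |t|)) ^ n) := by
        gcongr
        exact abs_sub_le_of_abs_le_mul_pow hfC ((abs_add_le s t).trans (by linarith))
          (by linarith [abs_nonneg t])
    _ = 2 * C * (exp (-(Φ * t)) * ((2 + |s₀|) + |t|) ^ n) := by ring

theorem discountedIncrement_pos (hΦ : 0 < Φ) (hf : Continuous f)
    (hfC : ∀ x, |f x| ≤ C * (1 + |x|) ^ n) (hmono : StrictMonoOn f (Ici A)) {s : ℝ}
    (hs : A ≤ s) : 0 < discountedIncrement Φ f s := by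
  have hpos : ∀ t ∈ Ioi (0 : ℝ), 0 < exp (-(Φ * t)) * (f (s + t) - f s) := fun t ht =>
    mul_pos (exp_pos _) (sub_pos.2 (hmono (mem_Ici.2 hs)
      (mem_Ici.2 (by linarith [mem_Ioi.1 ht])) (by linarith [mem_Ioi.1 ht])))
  exact setIntegral_Ioi_pos (integrableOn_discountedIncrement_integrand hΦ hf hfC s)
    (fun t ht => (hpos t ht).le) hpos

theorem strictMonoOn_discountedIncrement (hΦ : 0 < Φ) (hf : Continuous f)
    (hfC : ∀ x, |f x| ≤ C * (1 + |x|) ^ n) (hconv : ConvexOn ℝ (Iic A) f)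
    (hanti : AntitoneOn f (Iic A)) (hmono : StrictMonoOn f (Ici A)) :
    StrictMonoOn (discountedIncrement Φ f) (Iic A) := by
  intro a ha b hb hab
  have hint := integrableOn_discountedIncrement_integrand hΦ hf hfC
  rw [← sub_pos, discountedIncrement, discountedIncrement, ← integral_sub (hint b) (hint a)]
  refine setIntegral_Ioi_pos ((hint b).sub (hint a)) (T := A - a) (fun t ht => ?_) fun t ht => ?_
  · have h := map_add_sub_le_map_add_sub_of_valley hconv hanti hmono.monotoneOn
      hab.le hb (mem_Ioi.1 ht).le
    rw [← mul_sub]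
    exact mul_nonneg (exp_pos _).le (by linarith)
  · have ht : A < a + t := by linarith [mem_Ioi.1 ht]
    have h₁ := hmono (mem_Ici.2 ht.le) (mem_Ici.2 (by linarith)) (by linarith : a + t < b + t)
    have h₂ := hanti ha hb hab.le
    rw [← mul_sub]
    exact mul_pos (exp_pos _) (by linarith)

lemma integral_Ioc_discountedIncrement_integrand_le (hΦ : 0 ≤ Φ) (hf : Continuous f)
    (hconv : ConvexOn ℝ (Iic A) f) (hanti : AntitoneOn f (Iic A)) (hmono : MonotoneOn f (Ici A))
    {r : ℝ} (hr : 2 ≤ r) :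
    ∫ t in Ioc 0 r, exp (-(Φ * t)) * (f (A - r + t) - f (A - r)) ≤
      -((f (A - 2) - f (A - 1)) * exp (-(Φ * 2))) := by
  set φ : ℝ → ℝ := fun t => exp (-(Φ * t)) * (f (A - r + t) - f (A - r))
  have hφ : Continuous φ := by fun_prop
  have hnonpos : ∀ t ∈ Ioc 0 r, φ t ≤ 0 := fun t ht =>
    mul_nonpos_of_nonneg_of_nonpos (exp_pos _).le (sub_nonpos.2 (hanti (mem_Iic.2 (by linarith))
      (mem_Iic.2 (by linarith [ht.2])) (by linarith [ht.1])))
  have hmid : ∀ t ∈ Ioc 1 2, φ t ≤ -((f (A - 2) - f (A - 1)) * exp (-(Φ * 2))) := by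
    intro t ⟨ht₁, ht₂⟩
    have h₁ : f (A - r + t) ≤ f (A - r + 1) :=
      hanti (mem_Iic.2 (by linarith)) (mem_Iic.2 (by linarith)) (by linarith)
    have h₂ := map_add_sub_le_map_add_sub_of_valley hconv hanti hmono (a := A - r) (b := A - 2)
      (by linarith) (by linarith) zero_le_one
    have h₃ : exp (-(Φ * 2)) ≤ exp (-(Φ * t)) := exp_le_exp.2 (by nlinarith)
    have h₄ : f (A - 1) ≤ f (A - 2) := hanti (mem_Iic.2 (by linarith)) (mem_Iic.2 (by linarith))
      (by linarith)
    rw [show A - 2 + 1 = A - 1 by ring] at h₂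
    calc φ t ≤ exp (-(Φ * t)) * -(f (A - 2) - f (A - 1)) :=
          mul_le_mul_of_nonneg_left (by linarith) (exp_pos _).le
      _ ≤ exp (-(Φ * 2)) * -(f (A - 2) - f (A - 1)) :=
          mul_le_mul_of_nonpos_right h₃ (by linarith)
      _ = _ := by ring
  have hsub : ∫ t in Ioc 1 2, -φ t ≤ ∫ t in Ioc 0 r, -φ t :=
    setIntegral_mono_set hφ.neg.integrableOn_Ioc
      ((ae_restrict_iff' measurableSet_Ioc).2 (Eventually.of_forall fun t ht =>
        neg_nonneg.2 (hnonpos t ht)))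
      (Ioc_subset_Ioc (by norm_num) hr).eventuallyLE
  have hmid_int : ∫ t in Ioc 1 2, φ t ≤ -((f (A - 2) - f (A - 1)) * exp (-(Φ * 2))) := by
    refine (setIntegral_mono_on hφ.integrableOn_Ioc (integrableOn_const (by simp))
      measurableSet_Ioc hmid).trans_eq ?_
    norm_num
  rw [integral_neg, integral_neg] at hsub
  linarith

theorem exists_discountedIncrement_neg (hΦ : 0 < Φ) (hf : Continuous f)
    (hfC : ∀ x, |f x| ≤ C * (1 + |x|) ^ n) (hconv : ConvexOn ℝ (Iic A) f)
    (hanti : StrictAntiOn f (Iic A)) (hmono : MonotoneOn f (Ici A)) :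
    ∃ s, discountedIncrement Φ f s < 0 := by
  set δ := (f (A - 2) - f (A - 1)) * exp (-(Φ * 2))
  have hδ : 0 < δ := mul_pos (sub_pos.2 (hanti (mem_Iic.2 (by linarith))
    (mem_Iic.2 (by linarith)) (by linarith))) (exp_pos _)
  set k : ℝ → ℝ := fun t => 2 * C * (exp (-(Φ * t)) * ((1 + |A|) + |t|) ^ n)
  have hk : IntegrableOn k (Ioi 0) :=
    (integrableOn_exp_neg_mul_mul_add_abs_pow hΦ _ n 0).const_mul _
  obtain ⟨r, hr, hr₂⟩ := (((tendsto_setIntegral_Ioi_atTop hk).eventually (gt_mem_nhds hδ)).and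
    (eventually_ge_atTop 2)).exists
  refine ⟨A - r, ?_⟩
  have hint := integrableOn_discountedIncrement_integrand hΦ hf hfC (A - r)
  have htail :
      ∫ t in Ioi r, exp (-(Φ * t)) * (f (A - r + t) - f (A - r)) ≤ ∫ t in Ioi r, k t := by
    refine setIntegral_mono_on (hint.mono_set (Ioi_subset_Ioi (by linarith)))
      (hk.mono_set (Ioi_subset_Ioi (by linarith))) measurableSet_Ioi fun t ht => ?_
    have htr : r < t := ht
    have ht : |t| = t := abs_of_pos (by linarith)
    calc _ ≤ ‖exp (-(Φ * t)) * (f (A - r + t) - f (A - r))‖ := Real.le_norm_self _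
      _ = exp (-(Φ * t)) * |f (A - r + t) - f (A - r)| := norm_exp_mul _ _
      _ ≤ exp (-(Φ * t)) * (2 * C * (1 + (|A| + |t|)) ^ n) := by
          gcongr
          exact abs_sub_le_of_abs_le_mul_pow hfC
            (abs_le.2 ⟨by linarith [neg_abs_le A], by linarith [le_abs_self A]⟩)
            (abs_le.2 ⟨by linarith [neg_abs_le A], by linarith [le_abs_self A]⟩)
      _ = k t := by ring
  rw [discountedIncrement, ← Ioc_union_Ioi_eq_Ioi (by linarith : (0 : ℝ) ≤ r),
    setIntegral_union Ioc_disjoint_Ioi_same measurableSet_Ioi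
      (hint.mono_set Ioc_subset_Ioi_self) (hint.mono_set (Ioi_subset_Ioi (by linarith)))]
  linarith [integral_Ioc_discountedIncrement_integrand_le hΦ.le hf hconv hanti.antitoneOn hmono
    hr₂]

end DiscountedIncrement

theorem exists_unique_zero_of_strictMonoOn_Iic {H : ℝ → ℝ} {A : ℝ} (hH : Continuous H)
    (hmono : StrictMonoOn H (Iic A)) (hpos : ∀ x, A ≤ x → 0 < H x) (hneg : ∃ s, H s < 0) :
    ∃ z, z < A ∧ H z = 0 ∧ (∀ x, x < z → H x < 0) ∧ (∀ x, z < x → 0 < H x) ∧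
      ∀ z', H z' = 0 → z' = z := by
  obtain ⟨s, hs⟩ := hneg
  have hsA : s < A := lt_of_not_ge fun h => (hpos s h).not_gt hs
  obtain ⟨z, ⟨-, hzA⟩, hz⟩ := intermediate_value_Ioo hsA.le hH.continuousOn ⟨hs, hpos A le_rfl⟩
  have hlt : ∀ x, x < z → H x < 0 := fun x hx =>
    hz ▸ hmono (mem_Iic.2 (by linarith)) (mem_Iic.2 hzA.le) hx
  have hgt : ∀ x, z < x → 0 < H x := fun x hx => by
    rcases le_or_gt x A with hxA | hxA
    · exact hz ▸ hmono (mem_Iic.2 hzA.le) (mem_Iic.2 hxA) hx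
    · exact hpos x hxA.le
  refine ⟨z, hzA, hz, hlt, hgt, fun z' hz' => ?_⟩
  rcases lt_trichotomy z' z with h | h | h
  · exact absurd hz' (hlt z' h).ne
  · exact h
  · exact absurd hz' (hgt z' h).ne'

theorem stmt0_general
    (Φ : ℝ) (hΦ : 0 < Φ)
    (f g : ℝ → ℝ) (abar : ℝ)
    (hf_cont : Continuous f)
    (hf_pw : ∃ D : Set ℝ, D.Countable ∧ ∀ x ∉ D, HasDerivAt f (g x) x ∧ ContinuousAt g x)
    (hg_meas : Measurable g)
    (hf_poly : ∃ C : ℝ, ∃ n : ℕ, ∀ x : ℝ, |f x| ≤ C * (1 + |x|) ^ n)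
    (hg_poly : ∃ C : ℝ, ∃ n : ℕ, ∀ x : ℝ, |g x| ≤ C * (1 + |x|) ^ n)
    (hf_inc : StrictMonoOn f (Set.Ioi abar))
    (hf_dec : StrictAntiOn f (Set.Iio abar))
    (hf_conv : ConvexOn ℝ (Set.Iio abar) f) :
    (∀ s : ℝ, IntegrableOn (fun y => Real.exp (-(Φ * (y - s))) * g y) (Set.Ioi s)) ∧
    ∃ aund : ℝ, aund < abar ∧ Psi Φ g aund = 0 ∧
      (∀ x, x < aund → Psi Φ g x < 0) ∧
      (∀ x, aund < x → 0 < Psi Φ g x) ∧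
      (∀ a' : ℝ, Psi Φ g a' = 0 → a' = aund) := by
  obtain ⟨D, hD, hfg⟩ := hf_pw
  obtain ⟨Cf, nf, hfC⟩ := hf_poly
  obtain ⟨Cg, ng, hgC⟩ := hg_poly
  have hmono := hf_inc.Ici_of_continuous hf_cont
  have hanti := hf_dec.Iic_of_continuous hf_cont
  have hconv := hf_conv.Iic_of_continuous hf_cont
  have hPsi : Psi Φ g = fun s => Φ * discountedIncrement Φ f s := funext <|
    psi_eq_mul_discountedIncrement hΦ hD (fun x hx => (hfg x hx).1) hf_cont hg_meas hfC hgC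
  refine ⟨fun s => integrableOn_exp_mul_of_abs_le hΦ s hg_meas.aestronglyMeasurable hgC, ?_⟩
  obtain ⟨s, hs⟩ := exists_discountedIncrement_neg hΦ hf_cont hfC hconv hanti hmono.monotoneOn
  rw [hPsi]
  exact exists_unique_zero_of_strictMonoOn_Iic
    (continuous_const.mul (continuous_discountedIncrement hΦ hf_cont hfC))
    (fun x hx y hy hxy => mul_lt_mul_of_pos_left
      (strictMonoOn_discountedIncrement hΦ hf_cont hfC hconv hanti.antitoneOn hmono hx hy hxy)
      hΦ)
    (fun x hx => mul_pos hΦ (discountedIncrement_pos hΦ hf_cont hfC hmono hx))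
    ⟨s, mul_neg_of_pos_of_neg hΦ hs⟩

/-- Under the standing assumptions on `f̃`, the function `Ψ` is finite-valued and there exists
a unique `a̲ < ā` such that `Ψ(a̲) = 0`; moreover `Ψ < 0` below `a̲` and `Ψ > 0` above `a̲`. -/
theorem stmt0
    (Φ : ℝ) (hΦ : 0 < Φ)
    (f g : ℝ → ℝ) (abar c₀ x₀ : ℝ)
    (hf_cont : Continuous f)
    (hf_pw : ∃ D : Set ℝ, D.Countable ∧ ∀ x ∉ D, HasDerivAt f (g x) x ∧ ContinuousAt g x)
    (hg_meas : Measurable g)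
    (hf_poly : ∃ C : ℝ, ∃ n : ℕ, ∀ x : ℝ, |f x| ≤ C * (1 + |x|) ^ n)
    (hg_poly : ∃ C : ℝ, ∃ n : ℕ, ∀ x : ℝ, |g x| ≤ C * (1 + |x|) ^ n)
    (hf_inc : StrictMonoOn f (Set.Ioi abar))
    (hf_dec : StrictAntiOn f (Set.Iio abar))
    (hf_conv : ConvexOn ℝ (Set.Iio abar) f)
    (hc₀ : 0 < c₀) (hx₀ : abar ≤ x₀)
    (hg_ge : ∀ x, x₀ ≤ x → c₀ ≤ g x) :
    (∀ s : ℝ, IntegrableOn (fun y => Real.exp (-(Φ * (y - s))) * g y) (Set.Ioi s)) ∧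
    ∃ aund : ℝ, aund < abar ∧ Psi Φ g aund = 0 ∧
      (∀ x, x < aund → Psi Φ g x < 0) ∧
      (∀ x, aund < x → 0 < Psi Φ g x) ∧
      (∀ a' : ℝ, Psi Φ g a' = 0 → a' = aund) :=
  stmt0_general Φ hΦ f g abar hf_cont hf_pw hg_meas hf_poly hg_poly hf_inc hf_dec hf_conv
end Valley
end

section
/- Under the standing assumptions on f̃, the function Ψ is strictly increasing on (−∞, ā]; that is, Ψ(x₁) < Ψ(x₂) whenever x₁ < x₂ ≤ ā. -/
/-!
Fix `s ≤ ā` and split `f̃' = G + H` with `G = 1_{(-∞, ā]} f̃'` and `H = 1_{(ā, ∞)} f̃'`. Then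
`Ψ_H(s) = e^{-Φ(ā - s)} Ψ(ā)`, which is strictly increasing in `s` because `Ψ(ā) > 0`: `f̃' ≥ 0`
on `(ā, ∞)` and `f̃' ≥ c₀` far out. On the other hand `G` is monotone off a null set, since by
convexity `f̃'` is nondecreasing and nonpositive on `(-∞, ā)`; hence
`Ψ_G(s) = ∫_0^∞ e^{-Φt} G(s + t) dt` is monotone in `s`.
-/

open MeasureTheory Filter Set Topology

open Real

lemma HasDerivAt.nonneg_of_monotoneOn_of_mem_nhds {f : ℝ → ℝ} {f' x : ℝ} {s : Set ℝ}
    (hd : HasDerivAt f f' x) (hs : s ∈ 𝓝 x) (hf : MonotoneOn f s) : 0 ≤ f' :=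
  hd.hasDerivWithinAt.nonneg_of_monotoneOn
    (accPt_iff_frequently_nhdsNE.2 (eventually_nhdsWithin_of_eventually_nhds hs).frequently) hf

lemma HasDerivAt.nonpos_of_antitoneOn_of_mem_nhds {f : ℝ → ℝ} {f' x : ℝ} {s : Set ℝ}
    (hd : HasDerivAt f f' x) (hs : s ∈ 𝓝 x) (hf : AntitoneOn f s) : f' ≤ 0 :=
  hd.hasDerivWithinAt.nonpos_of_antitoneOn
    (accPt_iff_frequently_nhdsNE.2 (eventually_nhdsWithin_of_eventually_nhds hs).frequently) hf

lemma ConvexOn.monotoneOn_of_hasDerivAt {f g : ℝ → ℝ} {S D : Set ℝ} (hf : ConvexOn ℝ S f)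
    (hd : ∀ x ∉ D, HasDerivAt f (g x) x) : MonotoneOn g (S \ D) := by
  intro x hx y hy hxy
  rcases hxy.eq_or_lt with rfl | hxy
  · rfl
  exact (hf.le_slope_of_hasDerivAt hx.1 hy.1 hxy (hd x hx.2)).trans
    (hf.slope_le_of_hasDerivAt hx.1 hy.1 hxy (hd y hy.2))

lemma monotoneOn_indicator_Iic_of_convexOn {f g : ℝ → ℝ} {a : ℝ} {D : Set ℝ}
    (hconv : ConvexOn ℝ (Iio a) f) (hanti : AntitoneOn f (Iio a))
    (hd : ∀ x ∉ D, HasDerivAt f (g x) x) :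
    MonotoneOn ((Iic a).indicator g) (insert a D)ᶜ := by
  intro x hx y hy hxy
  simp only [mem_compl_iff, mem_insert_iff, not_or] at hx hy
  have hg_nonpos : ∀ z ∉ D, z < a → g z ≤ 0 := fun z hz hza =>
    (hd z hz).nonpos_of_antitoneOn_of_mem_nhds (Iio_mem_nhds hza) hanti
  rcases lt_or_gt_of_ne hy.1 with hya | hya
  · have hxa : x < a := hxy.trans_lt hya
    rw [indicator_of_mem (mem_Iic.2 hxa.le), indicator_of_mem (mem_Iic.2 hya.le)]
    exact hconv.monotoneOn_of_hasDerivAt hd ⟨hxa, hx.2⟩ ⟨hya, hy.2⟩ hxy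
  · rw [indicator_of_notMem (notMem_Iic.2 hya)]
    rcases lt_or_gt_of_ne hx.1 with hxa | hxa
    · rw [indicator_of_mem (mem_Iic.2 hxa.le)]
      exact hg_nonpos x hx.2 hxa
    · rw [indicator_of_notMem (notMem_Iic.2 hxa)]

section Psi

variable {Φ : ℝ} {g : ℝ → ℝ}

lemma one_add_abs_pow_le {b : ℝ} (hb : 0 < b) (y : ℝ) (n : ℕ) :
    (1 + |y|) ^ n ≤ n.factorial / b ^ n * exp (b * (1 + |y|)) := by
  have h := pow_div_factorial_le_exp (b * (1 + |y|)) (by positivity) n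
  rw [mul_pow, div_le_iff₀ (by positivity)] at h
  rw [div_mul_eq_mul_div, le_div_iff₀ (by positivity)]
  linarith

lemma integrableOn_exp_mul_of_abs_le_s1 (hΦ : 0 < Φ) (hg : AEStronglyMeasurable g)
    {C : ℝ} {n : ℕ} (hgC : ∀ y, |g y| ≤ C * (1 + |y|) ^ n) (s : ℝ) :
    IntegrableOn (fun y => exp (-(Φ * (y - s))) * g y) (Ioi s) := by
  have hC : 0 ≤ C := (abs_nonneg _).trans ((hgC 0).trans_eq (by simp))
  set M := C * (n.factorial / (Φ / 2) ^ n)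
  refine ((exp_neg_integrableOn_Ioi s (half_pos hΦ)).const_mul
    (M * exp (Φ / 2 * (1 + |s|) + Φ / 2 * s))).mono' ?_ ?_
  · have : Measurable fun y => exp (-(Φ * (y - s))) := by fun_prop
    exact this.aestronglyMeasurable.mul hg.restrict
  filter_upwards [ae_restrict_mem measurableSet_Ioi] with y hy
  have hy_abs : |y| ≤ (y - s) + |s| := by
    have := abs_sub_abs_le_abs_sub y s
    rw [abs_of_pos (sub_pos.2 hy)] at this
    linarith
  calc ‖exp (-(Φ * (y - s))) * g y‖ = exp (-(Φ * (y - s))) * |g y| := by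
        rw [norm_mul, Real.norm_eq_abs, Real.norm_eq_abs, abs_of_pos (exp_pos _)]
    _ ≤ exp (-(Φ * (y - s))) * (M * exp (Φ / 2 * (1 + |y|))) := by
        gcongr
        exact (hgC y).trans (by rw [mul_assoc]; gcongr; exact one_add_abs_pow_le (half_pos hΦ) y n)
    _ ≤ exp (-(Φ * (y - s))) * (M * exp (Φ / 2 * (1 + |s|) + Φ / 2 * (y - s))) := by
        gcongr
        nlinarith
    _ = M * exp (Φ / 2 * (1 + |s|) + Φ / 2 * s) * exp (-(Φ / 2) * y) := by
        rw [mul_left_comm, ← exp_add, mul_assoc M, ← exp_add]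
        ring_nf

lemma integrableOn_exp_mul_indicator {s : ℝ} {t : Set ℝ}
    (hg : IntegrableOn (fun y => exp (-(Φ * (y - s))) * g y) (Ioi s)) (ht : MeasurableSet t) :
    IntegrableOn (fun y => exp (-(Φ * (y - s))) * t.indicator g y) (Ioi s) :=
  (hg.indicator ht).congr_fun (fun _ _ => indicator_mul_right _ _ _) measurableSet_Ioi

lemma Psi_eq_integral_comp_add (s : ℝ) :
    Psi Φ g s = ∫ t in Ioi 0, exp (-(Φ * t)) * g (t + s) := by
  have h := (measurePreserving_add_right volume s).setIntegral_preimage_emb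
    (measurableEmbedding_addRight s) (fun y => exp (-(Φ * (y - s))) * g y) (Ioi s)
  simp only [preimage_add_const_Ioi, sub_self, add_sub_cancel_right] at h
  rw [Psi, ← h]

lemma integrableOn_comp_add_iff (s : ℝ) :
    IntegrableOn (fun t => exp (-(Φ * t)) * g (t + s)) (Ioi 0) ↔
      IntegrableOn (fun y => exp (-(Φ * (y - s))) * g y) (Ioi s) := by
  have h := (measurePreserving_add_right volume s).integrableOn_comp_preimage
    (measurableEmbedding_addRight s) (f := fun y => exp (-(Φ * (y - s))) * g y) (s := Ioi s)
  simpa only [preimage_add_const_Ioi, sub_self, Function.comp_def, add_sub_cancel_right] using h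

lemma Psi_monotone (hint : ∀ s, IntegrableOn (fun y => exp (-(Φ * (y - s))) * g y) (Ioi s))
    {N : Set ℝ} (hN : volume N = 0) (hg : MonotoneOn g Nᶜ) : Monotone (Psi Φ g) := by
  intro s₁ s₂ hs
  rw [Psi_eq_integral_comp_add, Psi_eq_integral_comp_add]
  have hshift : ∀ s, ∀ᵐ t, t + s ∉ N := fun s =>
    measure_eq_zero_iff_ae_notMem.1 ((measure_preimage_add_right volume s N).trans hN)
  refine integral_mono_ae ((integrableOn_comp_add_iff s₁).2 (hint s₁))
    ((integrableOn_comp_add_iff s₂).2 (hint s₂)) ?_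
  filter_upwards [ae_restrict_of_ae (hshift s₁), ae_restrict_of_ae (hshift s₂)] with t h₁ h₂
  gcongr
  exact hg h₁ h₂ (by linarith)

lemma Psi_indicator_Ioi {s a : ℝ} (hs : s ≤ a) :
    Psi Φ ((Ioi a).indicator g) s = exp (-(Φ * (a - s))) * Psi Φ g a := by
  have hind : (fun y => exp (-(Φ * (y - s))) * (Ioi a).indicator g y)
      = (Ioi a).indicator fun y => exp (-(Φ * (y - s))) * g y :=
    funext fun _ => (Set.indicator_mul_right _ (fun y => exp (-(Φ * (y - s)))) g).symm
  rw [Psi, Psi, hind, setIntegral_indicator measurableSet_Ioi, Ioi_inter_Ioi, max_eq_right hs]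
  rw [← integral_const_mul]
  congr 1 with y
  rw [← mul_assoc, ← exp_add]
  ring_nf

lemma Psi_eq_Psi_indicator_Iic_add {s a : ℝ}
    (hint : IntegrableOn (fun y => exp (-(Φ * (y - s))) * g y) (Ioi s)) (hs : s ≤ a) :
    Psi Φ g s = Psi Φ ((Iic a).indicator g) s + exp (-(Φ * (a - s))) * Psi Φ g a := by
  rw [← Psi_indicator_Ioi hs, Psi, Psi, Psi,
    ← integral_add (integrableOn_exp_mul_indicator hint measurableSet_Iic)
      (integrableOn_exp_mul_indicator hint measurableSet_Ioi)]
  congr 1 with y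
  rw [← mul_add, ← Pi.add_apply ((Iic a).indicator g), ← compl_Ioi, indicator_compl_add_self]

lemma Psi_pos {a c₀ x₀ : ℝ}
    (hint : IntegrableOn (fun y => exp (-(Φ * (y - a))) * g y) (Ioi a))
    (hg_nonneg : ∀ᵐ y, a < y → 0 ≤ g y) (hc₀ : 0 < c₀) (hg_ge : ∀ y, x₀ ≤ y → c₀ ≤ g y) :
    0 < Psi Φ g a := by
  have hnonneg : 0 ≤ᵐ[volume.restrict (Ioi a)] fun y => exp (-(Φ * (y - a))) * g y := by
    rw [EventuallyLE, ae_restrict_iff' measurableSet_Ioi]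
    filter_upwards [hg_nonneg] with y hy hya
    exact mul_nonneg (exp_pos _).le (hy hya)
  rw [Psi, setIntegral_pos_iff_support_of_nonneg_ae hnonneg hint]
  have hsub : Ioi (max a x₀) ⊆ (Function.support fun y => exp (-(Φ * (y - a))) * g y) ∩ Ioi a :=
    fun y hy => ⟨(mul_pos (exp_pos _)
      (hc₀.trans_le (hg_ge y ((le_max_right a x₀).trans hy.le)))).ne',
      (le_max_left a x₀).trans_lt hy⟩
  exact (by simp [Real.volume_Ioi] : 0 < volume (Ioi (max a x₀))).trans_le (measure_mono hsub)

end Psi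

theorem stmt1_general
    (Φ : ℝ) (hΦ : 0 < Φ)
    (f g : ℝ → ℝ) (abar c₀ x₀ : ℝ)
    (hf_pw : ∃ D : Set ℝ, D.Countable ∧ ∀ x ∉ D, HasDerivAt f (g x) x ∧ ContinuousAt g x)
    (hg_meas : Measurable g)
    (hg_poly : ∃ C : ℝ, ∃ n : ℕ, ∀ x : ℝ, |g x| ≤ C * (1 + |x|) ^ n)
    (hf_inc : StrictMonoOn f (Set.Ioi abar))
    (hf_dec : StrictAntiOn f (Set.Iio abar))
    (hf_conv : ConvexOn ℝ (Set.Iio abar) f)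
    (hc₀ : 0 < c₀)
    (hg_ge : ∀ x, x₀ ≤ x → c₀ ≤ g x) :
    ∀ x₁ x₂ : ℝ, x₁ < x₂ → x₂ ≤ abar → Psi Φ g x₁ < Psi Φ g x₂ := by
  intro x₁ x₂ h12 h2a
  obtain ⟨D, hD, hfg⟩ := hf_pw
  have hderiv : ∀ x ∉ D, HasDerivAt f (g x) x := fun x hx => (hfg x hx).1
  obtain ⟨C, n, hgC⟩ := hg_poly
  have hint := integrableOn_exp_mul_of_abs_le_s1 hΦ hg_meas.aestronglyMeasurable hgC
  have hcore : Monotone (Psi Φ ((Iic abar).indicator g)) :=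
    Psi_monotone (fun s => integrableOn_exp_mul_indicator (hint s) measurableSet_Iic)
      ((hD.insert abar).measure_zero _)
      (monotoneOn_indicator_Iic_of_convexOn hf_conv hf_dec.antitoneOn hderiv)
  have htail : 0 < Psi Φ g abar := by
    refine Psi_pos (hint abar) ?_ hc₀ hg_ge
    filter_upwards [hD.ae_notMem volume] with y hy hya
    exact (hderiv y hy).nonneg_of_monotoneOn_of_mem_nhds (Ioi_mem_nhds hya) hf_inc.monotoneOn
  have hexp : exp (-(Φ * (abar - x₁))) < exp (-(Φ * (abar - x₂))) :=
    exp_lt_exp.2 (by nlinarith)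
  rw [Psi_eq_Psi_indicator_Iic_add (hint x₁) (h12.le.trans h2a),
    Psi_eq_Psi_indicator_Iic_add (hint x₂) h2a]
  exact add_lt_add_of_le_of_lt (hcore h12.le) (mul_lt_mul_of_pos_right hexp htail)

theorem stmt1
    (Φ : ℝ) (hΦ : 0 < Φ)
    (f g : ℝ → ℝ) (abar c₀ x₀ : ℝ)
    (hf_cont : Continuous f)
    (hf_pw : ∃ D : Set ℝ, D.Countable ∧ ∀ x ∉ D, HasDerivAt f (g x) x ∧ ContinuousAt g x)
    (hg_meas : Measurable g)
    (hf_poly : ∃ C : ℝ, ∃ n : ℕ, ∀ x : ℝ, |f x| ≤ C * (1 + |x|) ^ n)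
    (hg_poly : ∃ C : ℝ, ∃ n : ℕ, ∀ x : ℝ, |g x| ≤ C * (1 + |x|) ^ n)
    (hf_inc : StrictMonoOn f (Set.Ioi abar))
    (hf_dec : StrictAntiOn f (Set.Iio abar))
    (hf_conv : ConvexOn ℝ (Set.Iio abar) f)
    (hc₀ : 0 < c₀) (hx₀ : abar ≤ x₀)
    (hg_ge : ∀ x, x₀ ≤ x → c₀ ≤ g x) :
    ∀ x₁ x₂ : ℝ, x₁ < x₂ → x₂ ≤ abar → Psi Φ g x₁ < Psi Φ g x₂ :=
  stmt1_general Φ hΦ f g abar c₀ x₀ hf_pw hg_meas hg_poly hf_inc hf_dec hf_conv hc₀ hg_ge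
end

section
/- Let a′ < a < ā and suppose inf_{b ≥ a} Γ(a, b) > −∞. Then inf_{b ≥ a′} Γ(a′, b) ≤ inf_{b ≥ a} Γ(a, b) + W((a − a′)/2) · ∫_{a′}^{(a+a′)/2} f̃′(y) dy < inf_{b ≥ a} Γ(a, b). In particular, the map a ↦ inf_{b ≥ a} Γ(a, b) is strictly increasing on any subinterval of (−∞, ā) on which it is finite. -/
open MeasureTheory Filter Set

/-- `Γ(a,b) = C_D + C_U + ∫_a^b W(b-y) f̃'(y) dy`, where `g` plays the role of `f̃'`. -/
noncomputable def Gam (W g : ℝ → ℝ) (CU CD a b : ℝ) : ℝ :=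
  CD + CU + ∫ y in a..b, W (b - y) * g y

/-- `inf_{b ≥ a} Γ(a, b)`, computed in the extended reals. -/
noncomputable def GamInf (W g : ℝ → ℝ) (CU CD a : ℝ) : EReal :=
  ⨅ b ∈ Set.Ici a, ((Gam W g CU CD a b : ℝ) : EReal)

open scoped Interval Topology

/-!
Moving the left end point from `a` to `a' < a < ā` changes `Γ(·, b)` by
`∫_{a'}^{a} W(b - y) f̃'(y) dy`. The integrand is nonpositive because `f̃' < 0` on `(-∞, ā)`, and
on the left half `(a', (a + a')/2)` the monotone kernel satisfies `W(b - y) ≥ W((a - a')/2) > 0`.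
Hence the change is at most `W((a - a')/2) ∫_{a'}^{(a+a')/2} f̃' < 0`, uniformly in `b ≥ a`, and
this bound passes to the infimum over `b`.
-/

lemma intervalIntegrable_of_abs_le_poly {g : ℝ → ℝ} (hg : Measurable g)
    (hpoly : ∃ C : ℝ, ∃ n : ℕ, ∀ x : ℝ, |g x| ≤ C * (1 + |x|) ^ n) (u v : ℝ) :
    IntervalIntegrable g volume u v := by
  obtain ⟨C, n, hC⟩ := hpoly
  have hbound : Continuous fun x : ℝ => C * (1 + |x|) ^ n := by fun_prop
  exact (hbound.intervalIntegrable u v).mono_fun' hg.aestronglyMeasurable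
    (ae_of_all _ fun x => hC x)

lemma intervalIntegral_neg_of_ae_neg {g : ℝ → ℝ} {u v : ℝ} (huv : u < v)
    (hg : IntervalIntegrable g volume u v) (hneg : ∀ᵐ x, x ∈ Ioc u v → g x < 0) :
    ∫ x in u..v, g x < 0 := by
  have hnonneg : 0 ≤ᵐ[volume.restrict (Ι u v)] fun x => -g x := by
    rw [uIoc_of_le huv.le]
    filter_upwards [ae_restrict_of_ae hneg, ae_restrict_mem measurableSet_Ioc] with x hx hmem
    exact neg_nonneg.mpr (hx hmem).le
  have hpos : 0 < ∫ x in u..v, -g x := by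
    rw [intervalIntegral.integral_pos_iff_support_of_nonneg_ae' hnonneg hg.neg]
    refine ⟨huv, lt_of_lt_of_le ?_
      (measure_mono_ae (s := Ioc u v) (hneg.mono fun x hx hmem => ?_))⟩
    · simpa [Real.volume_Ioc] using huv
    · exact ⟨neg_ne_zero.mpr (hx hmem).ne, hmem⟩
  simpa [intervalIntegral.integral_neg] using hpos

lemma nonneg_of_continuousOn_of_pos {W : ℝ → ℝ} (hW_cont : ContinuousOn W (Ici 0))
    (hW_pos : ∀ x, 0 < x → 0 < W x) {t : ℝ} (ht : 0 ≤ t) : 0 ≤ W t := by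
  rcases ht.eq_or_lt with rfl | ht
  · have hlim : Tendsto W (𝓝[>] 0) (𝓝 (W 0)) :=
      (hW_cont 0 self_mem_Ici).tendsto.mono_left (nhdsWithin_mono 0 Ioi_subset_Ici_self)
    exact ge_of_tendsto hlim (eventually_mem_nhdsWithin.mono fun x hx => (hW_pos x hx).le)
  · exact (hW_pos t ht).le

section Kernel

variable {W g : ℝ → ℝ}

lemma intervalIntegrable_mul_comp_sub (hW_cont : ContinuousOn W (Ici 0))
    (hg : ∀ u v, IntervalIntegrable g volume u v) {b u v : ℝ} (hu : u ≤ b) (hv : v ≤ b) :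
    IntervalIntegrable (fun y => W (b - y) * g y) volume u v := by
  refine (hg u v).continuousOn_mul
    (hW_cont.comp (continuous_sub_left b).continuousOn fun y hy => ?_)
  have : y ≤ max u v := hy.2
  simp only [mem_Ici]
  linarith [max_le hu hv]

lemma integral_mul_comp_sub_le (hW_cont : ContinuousOn W (Ici 0))
    (hW_mono : MonotoneOn W (Ici 0)) (hW_nonneg : ∀ t, 0 ≤ t → 0 ≤ W t)
    (hg : ∀ u v, IntervalIntegrable g volume u v) {a' m a b : ℝ}
    (hg_nonpos : ∀ᵐ y, y ≤ a → g y ≤ 0) (ha'm : a' ≤ m) (hma : m ≤ a) (hab : a ≤ b) :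
    ∫ y in a'..a, W (b - y) * g y ≤ W (a - m) * ∫ y in a'..m, g y := by
  have hint : ∀ {u v}, u ≤ b → v ≤ b → IntervalIntegrable (fun y => W (b - y) * g y) volume u v :=
    intervalIntegrable_mul_comp_sub hW_cont hg
  have hleft : ∫ y in a'..m, W (b - y) * g y ≤ ∫ y in a'..m, W (a - m) * g y := by
    refine intervalIntegral.integral_mono_ae_restrict ha'm (hint (by linarith) (by linarith))
      ((hg a' m).const_mul _) ?_
    filter_upwards [ae_restrict_of_ae hg_nonpos, ae_restrict_mem measurableSet_Icc] with y hy hmem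
    have hW : W (a - m) ≤ W (b - y) :=
      hW_mono (by simp only [mem_Ici]; linarith) (by simp only [mem_Ici]; linarith [hmem.2])
        (by linarith [hmem.2])
    exact mul_le_mul_of_nonpos_right hW (hy (by linarith [hmem.2]))
  have hright : ∫ y in m..a, W (b - y) * g y ≤ 0 := by
    refine (intervalIntegral.integral_mono_ae_restrict hma (hint (by linarith) hab)
      intervalIntegrable_const ?_).trans_eq intervalIntegral.integral_zero
    filter_upwards [ae_restrict_of_ae hg_nonpos, ae_restrict_mem measurableSet_Icc] with y hy hmem
    exact mul_nonpos_of_nonneg_of_nonpos (hW_nonneg _ (by linarith [hmem.2])) (hy hmem.2)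
  rw [← intervalIntegral.integral_add_adjacent_intervals (b := m)
    (hint (by linarith) (by linarith)) (hint (by linarith) hab),
    ← intervalIntegral.integral_const_mul]
  linarith

end Kernel

lemma biInf_coe_le_biInf_coe_add {ι : Type*} {s t : Set ι} {F G : ι → ℝ} {c : ℝ} (hst : s ⊆ t)
    (h : ∀ i ∈ s, G i ≤ F i + c) :
    ⨅ i ∈ t, (G i : EReal) ≤ (⨅ i ∈ s, (F i : EReal)) + c := by
  rw [← EReal.sub_le_iff_le_add (.inl (EReal.coe_ne_bot c)) (.inl (EReal.coe_ne_top c))]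
  refine le_iInf₂ fun i hi => ?_
  rw [EReal.sub_le_iff_le_add (.inl (EReal.coe_ne_bot c)) (.inl (EReal.coe_ne_top c))]
  exact (iInf₂_le i (hst hi)).trans (by exact_mod_cast h i hi)

section Gam

variable {W g : ℝ → ℝ} {CU CD : ℝ}

lemma Gam_le_Gam_add (hW_cont : ContinuousOn W (Ici 0)) (hW_mono : MonotoneOn W (Ici 0))
    (hW_nonneg : ∀ t, 0 ≤ t → 0 ≤ W t) (hg : ∀ u v, IntervalIntegrable g volume u v)
    {a' m a b : ℝ} (hg_nonpos : ∀ᵐ y, y ≤ a → g y ≤ 0)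
    (ha'm : a' ≤ m) (hma : m ≤ a) (hab : a ≤ b) :
    Gam W g CU CD a' b ≤ Gam W g CU CD a b + W (a - m) * ∫ y in a'..m, g y := by
  have hsplit := intervalIntegral.integral_add_adjacent_intervals (a := a') (b := a) (c := b)
    (intervalIntegrable_mul_comp_sub hW_cont hg (by linarith) hab)
    (intervalIntegrable_mul_comp_sub hW_cont hg hab le_rfl)
  have hle := integral_mul_comp_sub_le hW_cont hW_mono hW_nonneg hg hg_nonpos ha'm hma hab
  simp only [Gam]
  linarith

lemma GamInf_ne_top (a : ℝ) : GamInf W g CU CD a ≠ ⊤ :=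
  ((iInf₂_le a self_mem_Ici).trans_lt (EReal.coe_lt_top (Gam W g CU CD a a))).ne

lemma GamInf_le_GamInf_add (hW_cont : ContinuousOn W (Ici 0)) (hW_mono : MonotoneOn W (Ici 0))
    (hW_nonneg : ∀ t, 0 ≤ t → 0 ≤ W t) (hg : ∀ u v, IntervalIntegrable g volume u v)
    {a' m a : ℝ} (hg_nonpos : ∀ᵐ y, y ≤ a → g y ≤ 0) (ha'm : a' ≤ m) (hma : m ≤ a) :
    GamInf W g CU CD a' ≤
      GamInf W g CU CD a + ((W (a - m) * ∫ y in a'..m, g y : ℝ) : EReal) :=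
  biInf_coe_le_biInf_coe_add (Ici_subset_Ici.mpr (ha'm.trans hma)) fun _ hb =>
    Gam_le_Gam_add hW_cont hW_mono hW_nonneg hg hg_nonpos ha'm hma hb

end Gam

section Midpoint

variable {W g : ℝ → ℝ} {CU CD abar a' a : ℝ}

lemma GamInf_le_GamInf_add_half (hW_cont : ContinuousOn W (Ici 0))
    (hW_mono : MonotoneOn W (Ici 0)) (hW_pos : ∀ x, 0 < x → 0 < W x)
    (hg : ∀ u v, IntervalIntegrable g volume u v) (hg_neg : ∀ᵐ x, x < abar → g x < 0)
    (ha' : a' ≤ a) (ha : a < abar) :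
    GamInf W g CU CD a' ≤ GamInf W g CU CD a +
      ((W ((a - a') / 2) * ∫ y in a'..((a + a') / 2), g y : ℝ) : EReal) := by
  have hg_nonpos : ∀ᵐ y, y ≤ a → g y ≤ 0 :=
    hg_neg.mono fun y hy hya => (hy (hya.trans_lt ha)).le
  have h := GamInf_le_GamInf_add (CU := CU) (CD := CD) hW_cont hW_mono
    (fun _ => nonneg_of_continuousOn_of_pos hW_cont hW_pos) hg hg_nonpos
    (a' := a') (m := (a + a') / 2) (by linarith) (by linarith)
  rwa [show a - (a + a') / 2 = (a - a') / 2 by ring] at h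

lemma half_mul_integral_neg (hW_pos : ∀ x, 0 < x → 0 < W x)
    (hg : ∀ u v, IntervalIntegrable g volume u v) (hg_neg : ∀ᵐ x, x < abar → g x < 0)
    (ha' : a' < a) (ha : a < abar) :
    W ((a - a') / 2) * ∫ y in a'..((a + a') / 2), g y < 0 :=
  mul_neg_of_pos_of_neg (hW_pos _ (by linarith)) <|
    intervalIntegral_neg_of_ae_neg (by linarith) (hg _ _)
      (hg_neg.mono fun _ hy hmem => hy (by linarith [hmem.2]))

lemma GamInf_lt_GamInf (hW_cont : ContinuousOn W (Ici 0))
    (hW_mono : MonotoneOn W (Ici 0)) (hW_pos : ∀ x, 0 < x → 0 < W x)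
    (hg : ∀ u v, IntervalIntegrable g volume u v) (hg_neg : ∀ᵐ x, x < abar → g x < 0)
    (ha' : a' < a) (ha : a < abar) (hfin : GamInf W g CU CD a ≠ ⊥) :
    GamInf W g CU CD a' < GamInf W g CU CD a := by
  have hle := GamInf_le_GamInf_add_half (CU := CU) (CD := CD) hW_cont hW_mono hW_pos hg hg_neg
    ha'.le ha
  have hneg := half_mul_integral_neg hW_pos hg hg_neg ha' ha
  lift GamInf W g CU CD a to ℝ using ⟨GamInf_ne_top a, hfin⟩ with r
  refine hle.trans_lt ?_
  exact_mod_cast (by linarith : r + W ((a - a') / 2) * ∫ y in a'..((a + a') / 2), g y < r)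

end Midpoint

theorem stmt4_general
    (g : ℝ → ℝ) (abar : ℝ)
    (hg_meas : Measurable g)
    (hg_poly : ∃ C : ℝ, ∃ n : ℕ, ∀ x : ℝ, |g x| ≤ C * (1 + |x|) ^ n)
    (hg_neg : ∀ᵐ x ∂(volume : Measure ℝ), x < abar → g x < 0)
    (W : ℝ → ℝ)
    (hW_cont : ContinuousOn W (Set.Ici 0))
    (hW_mono : StrictMonoOn W (Set.Ici 0))
    (hW_pos : ∀ x, 0 < x → 0 < W x)
    (CU CD : ℝ)
    (a' a : ℝ) (ha' : a' < a) (ha : a < abar)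
    (hfin : ⊥ < GamInf W g CU CD a) :
    GamInf W g CU CD a' ≤ GamInf W g CU CD a +
        ((W ((a - a') / 2) * ∫ y in a'..((a + a') / 2), g y : ℝ) : EReal) ∧
    GamInf W g CU CD a' < GamInf W g CU CD a ∧
    (∀ a₁ a₂ : ℝ, a₁ < a₂ → a₂ < abar →
      GamInf W g CU CD a₁ ≠ ⊥ → GamInf W g CU CD a₂ ≠ ⊥ →
      GamInf W g CU CD a₁ < GamInf W g CU CD a₂) := by
  have hg := intervalIntegrable_of_abs_le_poly hg_meas hg_poly
  have hW_mono' := hW_mono.monotoneOn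
  exact ⟨GamInf_le_GamInf_add_half hW_cont hW_mono' hW_pos hg hg_neg ha'.le ha,
    GamInf_lt_GamInf hW_cont hW_mono' hW_pos hg hg_neg ha' ha hfin.ne',
    fun _ _ h₁₂ h₂ _ hfin₂ => GamInf_lt_GamInf hW_cont hW_mono' hW_pos hg hg_neg h₁₂ h₂ hfin₂⟩

theorem stmt4
    (Φ : ℝ) (hΦ : 0 < Φ)
    (f g : ℝ → ℝ) (abar c₀ x₀ : ℝ)
    (hf_cont : Continuous f)
    (hf_pw : ∃ D : Set ℝ, D.Countable ∧ ∀ x ∉ D, HasDerivAt f (g x) x ∧ ContinuousAt g x)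
    (hg_meas : Measurable g)
    (hf_poly : ∃ C : ℝ, ∃ n : ℕ, ∀ x : ℝ, |f x| ≤ C * (1 + |x|) ^ n)
    (hg_poly : ∃ C : ℝ, ∃ n : ℕ, ∀ x : ℝ, |g x| ≤ C * (1 + |x|) ^ n)
    (hf_inc : StrictMonoOn f (Set.Ioi abar))
    (hf_dec : StrictAntiOn f (Set.Iio abar))
    (hf_conv : ConvexOn ℝ (Set.Iio abar) f)
    (hc₀ : 0 < c₀) (hx₀ : abar ≤ x₀)
    (hg_ge : ∀ x, x₀ ≤ x → c₀ ≤ g x)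
    (hg_neg : ∀ᵐ x ∂(volume : Measure ℝ), x < abar → g x < 0)
    (W : ℝ → ℝ)
    (hW_neg : ∀ x, x < 0 → W x = 0)
    (hW_cont : ContinuousOn W (Set.Ici 0))
    (hW_mono : StrictMonoOn W (Set.Ici 0))
    (hW_pos : ∀ x, 0 < x → 0 < W x)
    (CU CD : ℝ) (hC : 0 < CU + CD)
    (a' a : ℝ) (ha' : a' < a) (ha : a < abar)
    (hfin : ⊥ < GamInf W g CU CD a) :
    GamInf W g CU CD a' ≤ GamInf W g CU CD a +
        ((W ((a - a') / 2) * ∫ y in a'..((a + a') / 2), g y : ℝ) : EReal) ∧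
    GamInf W g CU CD a' < GamInf W g CU CD a ∧
    (∀ a₁ a₂ : ℝ, a₁ < a₂ → a₂ < abar →
      GamInf W g CU CD a₁ ≠ ⊥ → GamInf W g CU CD a₂ ≠ ⊥ →
      GamInf W g CU CD a₁ < GamInf W g CU CD a₂) :=
  stmt4_general g abar hg_meas hg_poly hg_neg W hW_cont hW_mono hW_pos CU CD a' a ha' ha hfin
end

section
/- For every b ∈ ℝ there exists a unique a(b) ∈ (−∞, min(ā, b)) such that Γ(a(b), b) = 0. Moreover Γ(a, b) < 0 for every a < a(b), Γ(a, b) > 0 for every a with a(b) < a < min(ā, b), and Γ(a, b) > 0 for every a ∈ [min(ā, b), b]. -/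
/-! For fixed `b`, `a ↦ Γ(a, b)` is continuous. Convexity and strict decrease of `f̃` on
`(-∞, ā)` make `f̃' < 0` there, so below `m = min(ā, b)` the integrand `W(b - y) f̃'(y)` is
negative and `Γ(·, b)` is strictly increasing on `(-∞, m]`. On `[m, b]` the integrand is
nonnegative, so there `Γ ≥ C_U + C_D > 0`. Far to the left, monotonicity of `f̃'` (convexity)
and of `W` bound the integrand by a negative constant, so `Γ(a, b) → -∞` as `a → -∞`, and the
intermediate value theorem gives the unique zero `a(b) < m`. -/

open MeasureTheory Filter Set

open Topology

section Derivative

variable {S : Set ℝ} {f : ℝ → ℝ} {x y f'x f'y : ℝ}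

theorem ConvexOn.le_of_hasDerivAt_of_le (hfc : ConvexOn ℝ S f) (hx : x ∈ S) (hy : y ∈ S)
    (hxy : x ≤ y) (hfx : HasDerivAt f f'x x) (hfy : HasDerivAt f f'y y) : f'x ≤ f'y := by
  rcases hxy.eq_or_lt with rfl | hxy
  · exact (hfx.unique hfy).le
  · exact (hfc.le_slope_of_hasDerivAt hx hy hxy hfx).trans
      (hfc.slope_le_of_hasDerivAt hx hy hxy hfy)

theorem ConvexOn.neg_of_hasDerivAt_of_strictAntiOn (hfc : ConvexOn ℝ S f)
    (hf : StrictAntiOn f S) (hx : x ∈ S) (hy : y ∈ S) (hxy : x < y)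
    (hfx : HasDerivAt f f'x x) : f'x < 0 := by
  refine (hfc.le_slope_of_hasDerivAt hx hy hxy hfx).trans_lt ?_
  rw [slope_def_field]
  exact div_neg_of_neg_of_pos (sub_neg.mpr (hf hx hy hxy)) (sub_pos.mpr hxy)

theorem HasDerivAt.nonneg_of_monotoneOn_of_mem_nhds_s8 (hfx : HasDerivAt f f'x x)
    (hf : MonotoneOn f S) (hS : S ∈ 𝓝 x) : 0 ≤ f'x := by
  have hacc : AccPt x (𝓟 S) := by
    simpa using (PerfectSpace.univ_preperfect x (mem_univ x)).nhds_inter hS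
  exact hfx.hasDerivWithinAt.nonneg_of_monotoneOn hacc hf

theorem aestronglyMeasurable_of_ae_hasDerivAt {g : ℝ → ℝ}
    (hfg : ∀ᵐ x, HasDerivAt f (g x) x) : AEStronglyMeasurable g :=
  (measurable_deriv f).aestronglyMeasurable.congr (hfg.mono fun _ hx => hx.deriv)

end Derivative

section Kernel

variable {W g : ℝ → ℝ} (hW_neg : ∀ x, x < 0 → W x = 0) (hW_mono : MonotoneOn W (Ici 0))
include hW_neg hW_mono

theorem measurable_of_monotoneOn_Ici : Measurable W := by
  have hmono : Monotone fun x => W (max x 0) := fun x y hxy =>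
    hW_mono (le_max_right x 0) (le_max_right y 0) (max_le_max_right 0 hxy)
  have hW : (Ici 0).indicator (fun x => W (max x 0)) = W := by
    funext x
    by_cases hx : 0 ≤ x
    · simp [hx]
    · simp [hx, hW_neg x (not_le.mp hx)]
  exact hW ▸ hmono.measurable.indicator measurableSet_Ici

theorem abs_le_of_monotoneOn_Ici {x R : ℝ} (hxR : x ≤ R) : |W x| ≤ |W 0| + |W R| := by
  rcases lt_or_ge x 0 with hx | hx
  · rw [hW_neg x hx, abs_zero]
    positivity
  · have h0 := hW_mono self_mem_Ici hx hx
    have hR := hW_mono hx (hx.trans hxR) hxR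
    exact abs_le.mpr ⟨by linarith [neg_abs_le (W 0), abs_nonneg (W R)],
      by linarith [le_abs_self (W R), abs_nonneg (W 0)]⟩

theorem intervalIntegrable_mul_of_monotoneOn_Ici (hg : LocallyIntegrable g) (b u v : ℝ) :
    IntervalIntegrable (fun y => W (b - y) * g y) volume u v := by
  rw [intervalIntegrable_iff]
  refine Integrable.bdd_mul (c := |W 0| + |W (b - min u v)|)
    ((hg.integrableOn_isCompact isCompact_uIcc).mono_set uIoc_subset_uIcc) ?_ ?_
  · exact ((measurable_of_monotoneOn_Ici hW_neg hW_mono).comp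
      (measurable_const.sub measurable_id)).aestronglyMeasurable
  · refine ae_restrict_of_forall_mem measurableSet_uIoc fun y hy => ?_
    exact abs_le_of_monotoneOn_Ici hW_neg hW_mono (by linarith [hy.1, min_le_left u v])

end Kernel

theorem locallyIntegrable_of_polynomial_growth {g : ℝ → ℝ} (hg : AEStronglyMeasurable g)
    {C : ℝ} {n : ℕ} (hgC : ∀ x, |g x| ≤ C * (1 + |x|) ^ n) : LocallyIntegrable g := by
  refine (show Continuous fun x : ℝ => C * (1 + |x|) ^ n by fun_prop).locallyIntegrable.mono hg
    (ae_of_all _ fun x => ?_)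
  simpa only [Real.norm_eq_abs] using (hgC x).trans (le_abs_self _)

theorem exists_zero_of_strictMonoOn_Iic {φ : ℝ → ℝ} {m : ℝ} (hφ : Continuous φ)
    (hφm : StrictMonoOn φ (Iic m)) (hbot : Tendsto φ atBot atBot) (hm : 0 < φ m) :
    ∃ r < m, φ r = 0 ∧ (∀ a < r, φ a < 0) ∧ (∀ a, r < a → a < m → 0 < φ a) ∧
      ∀ a < m, φ a = 0 → a = r := by
  obtain ⟨a₀, hneg, ha₀⟩ := ((hbot.eventually (eventually_lt_atBot 0)).and
    (eventually_le_atBot m)).exists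
  obtain ⟨r, ⟨-, hrm⟩, hr⟩ := intermediate_value_Ioo ha₀ hφ.continuousOn ⟨hneg, hm⟩
  refine ⟨r, hrm, hr, fun a har => ?_, fun a hra ham => ?_, fun a ham ha => ?_⟩
  · exact hr ▸ hφm (har.trans hrm).le hrm.le har
  · exact hr ▸ hφm hrm.le ham.le hra
  · exact hφm.injOn ham.le hrm.le (ha.trans hr.symm)

theorem intervalIntegral_neg_of_ae_neg_s8 {F : ℝ → ℝ} {a b : ℝ} (hab : a < b)
    (hF : IntervalIntegrable F volume a b) (hneg : ∀ᵐ y, y ∈ Ioo a b → F y < 0) :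
    ∫ y in a..b, F y < 0 := by
  suffices 0 < ∫ y in a..b, -F y by rwa [intervalIntegral.integral_neg, neg_pos] at this
  have hsupp : Ioo a b ∩ {y | y ∈ Ioo a b → F y < 0} ⊆
      Function.support (fun y => -F y) ∩ Ioc a b :=
    fun y ⟨hy, hFy⟩ => ⟨neg_ne_zero.mpr (hFy hy).ne, Ioo_subset_Ioc_self hy⟩
  refine (intervalIntegral.integral_pos_iff_support_of_nonneg_ae' ?_ hF.neg).mpr ⟨hab, ?_⟩
  · rw [uIoc_of_le hab.le]
    refine ae_restrict_of_ae_eq_of_ae_restrict Ioo_ae_eq_Ioc <|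
      (ae_restrict_iff' measurableSet_Ioo).mpr ?_
    filter_upwards [hneg] with y hFy hy using neg_nonneg.mpr (hFy hy).le
  · refine lt_of_lt_of_le ?_ (measure_mono hsupp)
    rw [measure_inter_conull hneg]
    simpa using hab

section Gam

variable {W g : ℝ → ℝ} {CU CD b : ℝ}

theorem gam_pos_of_le (hC : 0 < CU + CD) {a : ℝ} (hab : a ≤ b)
    (hF : ∀ᵐ y, y ∈ Ioo a b → 0 ≤ W (b - y) * g y) : 0 < Gam W g CU CD a b := by
  have : 0 ≤ ∫ y in a..b, W (b - y) * g y := by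
    refine intervalIntegral.integral_nonneg_of_ae_restrict hab
      (ae_restrict_of_ae_eq_of_ae_restrict Ioo_ae_eq_Icc ?_)
    exact (ae_restrict_iff' measurableSet_Ioo).mpr hF
  rw [Gam]
  linarith

variable (hF : ∀ u v, IntervalIntegrable (fun y => W (b - y) * g y) volume u v)
include hF

theorem gam_eq_gam_add (a₁ a₂ : ℝ) :
    Gam W g CU CD a₁ b = Gam W g CU CD a₂ b + ∫ y in a₁..a₂, W (b - y) * g y := by
  rw [Gam, Gam, ← intervalIntegral.integral_add_adjacent_intervals (hF a₁ a₂) (hF a₂ b)]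
  ring

theorem continuous_gam : Continuous fun a => Gam W g CU CD a b := by
  have h : (fun a => Gam W g CU CD a b) = fun a => CD + CU - ∫ y in b..a, W (b - y) * g y := by
    funext a
    rw [Gam, intervalIntegral.integral_symm, sub_eq_add_neg]
  rw [h]
  exact continuous_const.sub (intervalIntegral.continuous_primitive hF b)

theorem strictMonoOn_gam {m : ℝ} (hneg : ∀ᵐ y, y < m → W (b - y) * g y < 0) :
    StrictMonoOn (fun a => Gam W g CU CD a b) (Iic m) := by
  intro a₁ _ a₂ ha₂ h
  have := intervalIntegral_neg_of_ae_neg_s8 h (hF a₁ a₂)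
    (hneg.mono fun y hy hy' => hy (hy'.2.trans_le ha₂))
  simp only [gam_eq_gam_add hF a₁ a₂]
  linarith

theorem tendsto_gam_atBot {z c : ℝ} (hc : 0 < c) (hle : ∀ᵐ y, y ≤ z → W (b - y) * g y ≤ -c) :
    Tendsto (fun a => Gam W g CU CD a b) atBot atBot := by
  refine tendsto_atBot_mono' _ ?_ (tendsto_atBot_add_const_right _ (Gam W g CU CD z b - z * c)
    (tendsto_id.atBot_mul_const hc))
  filter_upwards [eventually_le_atBot z] with a ha
  have : ∫ y in a..z, W (b - y) * g y ≤ ∫ _ in a..z, -c :=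
    intervalIntegral.integral_mono_ae_restrict ha (hF a z) intervalIntegrable_const
      ((ae_restrict_iff' measurableSet_Icc).mpr (hle.mono fun y hy hy' => hy hy'.2))
  rw [intervalIntegral.integral_const, smul_eq_mul] at this
  rw [gam_eq_gam_add hF a z, id]
  linarith

end Gam

theorem exists_ae_mul_le_neg_of_convexOn {f g W : ℝ → ℝ} {abar b : ℝ}
    (hder : ∀ᵐ x, HasDerivAt f (g x) x) (hf_dec : StrictAntiOn f (Iio abar))
    (hf_conv : ConvexOn ℝ (Iio abar) f) (hW_mono : MonotoneOn W (Ici 0))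
    (hW_pos : ∀ x, 0 < x → 0 < W x) :
    ∃ z, ∃ c > 0, ∀ᵐ y, y ≤ z → W (b - y) * g y ≤ -c := by
  obtain ⟨z, hzm, hz⟩ : ∃ z, z < min abar b ∧ HasDerivAt f (g z) z := by
    have : (ae (volume.restrict (Iio (min abar b)))).NeBot := by
      rw [ae_restrict_neBot, Real.volume_Iio]
      exact ENNReal.top_ne_zero
    exact ((ae_restrict_mem measurableSet_Iio).and (ae_restrict_of_ae hder)).exists
  have hza : z < abar := hzm.trans_le (min_le_left _ _)
  have hzb : z < b := hzm.trans_le (min_le_right _ _)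
  obtain ⟨w, hzw, hwa⟩ := exists_between hza
  have hgz : g z < 0 := hf_conv.neg_of_hasDerivAt_of_strictAntiOn hf_dec hza hwa hzw hz
  have hWz : 0 < W (b - z) := hW_pos _ (sub_pos.mpr hzb)
  refine ⟨z, -(W (b - z) * g z), neg_pos.mpr (mul_neg_of_pos_of_neg hWz hgz), ?_⟩
  filter_upwards [hder] with y hy hyz
  have hgy : g y ≤ g z := hf_conv.le_of_hasDerivAt_of_le (hyz.trans_lt hza) hza hyz hy hz
  have hW : W (b - z) ≤ W (b - y) :=
    hW_mono (sub_nonneg.mpr hzb.le) (sub_nonneg.mpr (hyz.trans hzb.le)) (by linarith)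
  rw [neg_neg]
  calc W (b - y) * g y ≤ W (b - z) * g y := mul_le_mul_of_nonpos_right hW (hgy.trans hgz.le)
    _ ≤ W (b - z) * g z := mul_le_mul_of_nonneg_left hgy hWz.le

theorem stmt8_general
    (f g : ℝ → ℝ) (abar : ℝ)
    (hf_pw : ∃ D : Set ℝ, D.Countable ∧ ∀ x ∉ D, HasDerivAt f (g x) x ∧ ContinuousAt g x)
    (hg_poly : ∃ C : ℝ, ∃ n : ℕ, ∀ x : ℝ, |g x| ≤ C * (1 + |x|) ^ n)
    (hf_inc : StrictMonoOn f (Set.Ioi abar))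
    (hf_dec : StrictAntiOn f (Set.Iio abar))
    (hf_conv : ConvexOn ℝ (Set.Iio abar) f)
    (W : ℝ → ℝ)
    (hW_neg : ∀ x, x < 0 → W x = 0)
    (hW_mono : StrictMonoOn W (Set.Ici 0))
    (hW_pos : ∀ x, 0 < x → 0 < W x)
    (CU CD : ℝ) (hC : 0 < CU + CD) :
    ∀ b : ℝ, ∃ ab : ℝ, ab < min abar b ∧ Gam W g CU CD ab b = 0 ∧
      (∀ a, a < ab → Gam W g CU CD a b < 0) ∧
      (∀ a, ab < a → a < min abar b → 0 < Gam W g CU CD a b) ∧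
      (∀ a, min abar b ≤ a → a ≤ b → 0 < Gam W g CU CD a b) ∧
      (∀ a', a' < min abar b → Gam W g CU CD a' b = 0 → a' = ab) := by
  obtain ⟨D, hD, hDf⟩ := hf_pw
  obtain ⟨C, n, hgC⟩ := hg_poly
  have hder : ∀ᵐ x, HasDerivAt f (g x) x := (hD.ae_notMem volume).mono fun x hx => (hDf x hx).1
  have hg : LocallyIntegrable g :=
    locallyIntegrable_of_polynomial_growth (aestronglyMeasurable_of_ae_hasDerivAt hder) hgC
  intro b
  have hF := intervalIntegrable_mul_of_monotoneOn_Ici hW_neg hW_mono.monotoneOn hg b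
  have hneg : ∀ᵐ y, y < min abar b → W (b - y) * g y < 0 := by
    filter_upwards [hder] with y hy hym
    obtain ⟨w, hyw, hwa⟩ := exists_between (hym.trans_le (min_le_left abar b))
    exact mul_neg_of_pos_of_neg (hW_pos _ (sub_pos.mpr (hym.trans_le (min_le_right abar b))))
      (hf_conv.neg_of_hasDerivAt_of_strictAntiOn hf_dec (hyw.trans hwa) hwa hyw hy)
  have hpos : ∀ a, min abar b ≤ a → a ≤ b → 0 < Gam W g CU CD a b := fun a ha hab => by
    refine gam_pos_of_le hC hab ?_
    filter_upwards [hder] with y hy ⟨hay, hyb⟩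
    have hya : abar < y := (min_lt_iff.mp (ha.trans_lt hay)).resolve_right hyb.not_gt
    exact mul_nonneg (hW_pos _ (sub_pos.mpr hyb)).le
      (hy.nonneg_of_monotoneOn_of_mem_nhds_s8 hf_inc.monotoneOn (Ioi_mem_nhds hya))
  obtain ⟨z, c, hc, hle⟩ :=
    exists_ae_mul_le_neg_of_convexOn (b := b) hder hf_dec hf_conv hW_mono.monotoneOn hW_pos
  obtain ⟨ab, hab, h0, hlt, hgt, huniq⟩ := exists_zero_of_strictMonoOn_Iic (continuous_gam hF)
    (strictMonoOn_gam hF hneg) (tendsto_gam_atBot hF hc hle) (hpos _ le_rfl (min_le_right _ _))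
  exact ⟨ab, hab, h0, hlt, hgt, hpos, huniq⟩

/-- For every `b` there is a unique `a(b) < min(ā, b)` with `Γ(a(b), b) = 0`; moreover
`Γ(·, b)` is negative below `a(b)` and positive above it (up to `b`). -/
theorem stmt8
    (Φ : ℝ) (hΦ : 0 < Φ)
    (f g : ℝ → ℝ) (abar c₀ x₀ : ℝ)
    (hf_cont : Continuous f)
    (hf_pw : ∃ D : Set ℝ, D.Countable ∧ ∀ x ∉ D, HasDerivAt f (g x) x ∧ ContinuousAt g x)
    (hg_meas : Measurable g)
    (hf_poly : ∃ C : ℝ, ∃ n : ℕ, ∀ x : ℝ, |f x| ≤ C * (1 + |x|) ^ n)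
    (hg_poly : ∃ C : ℝ, ∃ n : ℕ, ∀ x : ℝ, |g x| ≤ C * (1 + |x|) ^ n)
    (hf_inc : StrictMonoOn f (Set.Ioi abar))
    (hf_dec : StrictAntiOn f (Set.Iio abar))
    (hf_conv : ConvexOn ℝ (Set.Iio abar) f)
    (hc₀ : 0 < c₀) (hx₀ : abar ≤ x₀)
    (hg_ge : ∀ x, x₀ ≤ x → c₀ ≤ g x)
    (W : ℝ → ℝ)
    (hW_neg : ∀ x, x < 0 → W x = 0)
    (hW_cont : ContinuousOn W (Set.Ici 0))
    (hW_mono : StrictMonoOn W (Set.Ici 0))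
    (hW_pos : ∀ x, 0 < x → 0 < W x)
    (CU CD : ℝ) (hC : 0 < CU + CD) :
    ∀ b : ℝ, ∃ ab : ℝ, ab < min abar b ∧ Gam W g CU CD ab b = 0 ∧
      (∀ a, a < ab → Gam W g CU CD a b < 0) ∧
      (∀ a, ab < a → a < min abar b → 0 < Gam W g CU CD a b) ∧
      (∀ a, min abar b ≤ a → a ≤ b → 0 < Gam W g CU CD a b) ∧
      (∀ a', a' < min abar b → Gam W g CU CD a' b = 0 → a' = ab) :=
  stmt8_general f g abar hf_pw hg_poly hf_inc hf_dec hf_conv W hW_neg hW_mono hW_pos CU CD hC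
end

section
/- (i) If b > b′ > b*, then a(b) < a(b′) < a*. (ii) If b > b*, then b̃(a(b)) ≤ b; in particular b″ ↦ Γ(a(b), b″) is strictly increasing on (b, ∞). -/
/-!
Below `ā` the integrand `W(b - y) f̃'(y)` is negative, since `f̃` is convex and decreasing there,
so `a ↦ Γ(a, b)` is strictly increasing for `a < min(ā, b)`. Since `W` is continuous away from `0`
and vanishes on `(-∞, 0)`, `b ↦ Γ(a, b)` is continuous, and with unimodality this makes
`Γ(a, ·)` strictly increasing on `[b̃(a), ∞)`. Hence `Γ(a*, b) > Γ(a*, b*) = 0` for `b > b*`,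
which forces `a(b) < a*`. Then `Γ(a(b), b*) < Γ(a*, b*) = 0 = Γ(a(b), b)`, so `Γ(a(b), ·)` is not
nonincreasing on `[b*, b]`, i.e. `b̃(a(b)) ≤ b`. Consequently `Γ(a(b'), b) > 0 = Γ(a(b), b)` for
`b > b' > b*`, and monotonicity in `a` gives `a(b) < a(b')`.
-/

open MeasureTheory Filter Set

open scoped Interval

lemma ConvexOn.neg_of_hasDerivAt_of_strictAntiOn_s9 {f : ℝ → ℝ} {c x f' : ℝ}
    (hconv : ConvexOn ℝ (Iio c) f) (hanti : StrictAntiOn f (Iio c)) (hx : x < c)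
    (hf' : HasDerivAt f f' x) : f' < 0 := by
  obtain ⟨t, hxt, htc⟩ := exists_between hx
  calc f' ≤ slope f x t := hconv.le_slope_of_hasDerivAt hx htc hxt hf'
    _ < 0 := by
      rw [slope_def_field]
      exact div_neg_of_neg_of_pos (sub_neg.2 (hanti hx htc hxt)) (sub_pos.2 hxt)

lemma locallyIntegrable_of_abs_le_pow {g : ℝ → ℝ} (hg : Measurable g)
    (hpoly : ∃ C : ℝ, ∃ n : ℕ, ∀ x : ℝ, |g x| ≤ C * (1 + |x|) ^ n) :
    LocallyIntegrable g := by
  obtain ⟨C, n, h⟩ := hpoly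
  refine (Continuous.locallyIntegrable (f := fun x : ℝ => C * (1 + |x|) ^ n) (by fun_prop)).mono
    hg.aestronglyMeasurable (ae_of_all _ fun x => ?_)
  simp only [Real.norm_eq_abs]
  exact (h x).trans (le_abs_self _)

lemma integral_pos_of_ae_pos_on {f : ℝ → ℝ} {a b : ℝ} (hfi : IntervalIntegrable f volume a b)
    (hpos : ∀ᵐ x, x ∈ Ioo a b → 0 < f x) (hab : a < b) : 0 < ∫ x in a..b, f x := by
  have hnonneg : 0 ≤ᵐ[volume.restrict (Ι a b)] f := by
    rw [EventuallyLE, uIoc_of_le hab.le]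
    refine ae_restrict_of_ae_eq_of_ae_restrict Ioo_ae_eq_Ioc ?_
    rw [ae_restrict_iff' measurableSet_Ioo]
    filter_upwards [hpos] with x hx hmem using (hx hmem).le
  have hsupp : (Ioo a b : Set ℝ) ≤ᵐ[volume] (Function.support f ∩ Ioc a b : Set ℝ) := by
    filter_upwards [hpos] with x hx hmem
    exact ⟨(hx hmem).ne', Ioo_subset_Ioc_self hmem⟩
  rw [intervalIntegral.integral_pos_iff_support_of_nonneg_ae' hnonneg hfi]
  exact ⟨hab, ((Measure.measure_Ioo_pos _).2 hab).trans_le (measure_mono_ae hsupp)⟩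

section Kernel

variable {W : ℝ → ℝ}

lemma monotone_of_monotoneOn_Ici (hneg : ∀ x, x < 0 → W x = 0)
    (hcont : ContinuousOn W (Ici 0)) (hmono : MonotoneOn W (Ici 0))
    (hpos : ∀ x, 0 < x → 0 < W x) : Monotone W := by
  have hW0 : 0 ≤ W 0 :=
    ge_of_tendsto ((hcont 0 self_mem_Ici).mono_left (nhdsWithin_mono 0 Ioi_subset_Ici_self))
      (eventually_nhdsWithin_of_forall fun x hx => (hpos x hx).le)
  intro x y hxy
  rcases lt_or_ge x 0 with hx | hx
  · rw [hneg x hx]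
    rcases lt_or_ge y 0 with hy | hy
    · rw [hneg y hy]
    · exact hW0.trans (hmono self_mem_Ici hy hy)
  · exact hmono hx (hx.trans hxy) hxy

lemma nonneg_of_monotone (hneg : ∀ x, x < 0 → W x = 0) (hW : Monotone W) (t : ℝ) :
    0 ≤ W t :=
  calc 0 = W (min t (-1)) := (hneg _ (by simp)).symm
    _ ≤ W t := hW (min_le_left _ _)

lemma continuousAt_of_ne_zero (hneg : ∀ x, x < 0 → W x = 0)
    (hcont : ContinuousOn W (Ici 0)) {x : ℝ} (hx : x ≠ 0) : ContinuousAt W x := by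
  rcases hx.lt_or_gt with hx | hx
  · exact continuousAt_const.congr
      (eventually_of_mem (Iio_mem_nhds hx) fun y hy => (hneg y hy).symm)
  · exact hcont.continuousAt (Ici_mem_nhds hx)

end Kernel

section Gam

variable {W g : ℝ → ℝ} {CU CD : ℝ}

lemma intervalIntegrable_kernel_mul (hW : Monotone W) (hg : LocallyIntegrable g) (b u v : ℝ) :
    IntervalIntegrable (fun y => W (b - y) * g y) volume u v := by
  rw [intervalIntegrable_iff]
  refine ((hg.integrableOn_isCompact isCompact_uIcc).mono_set uIoc_subset_uIcc).bdd_mul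
    (c := max |W (b - max u v)| |W (b - min u v)|)
    (hW.measurable.comp (measurable_const.sub measurable_id)).aestronglyMeasurable
    ((ae_restrict_mem measurableSet_uIoc).mono fun y hy => ?_)
  obtain ⟨hy₁, hy₂⟩ := uIoc_subset_uIcc hy
  exact abs_le_max_abs_abs (hW (sub_le_sub_left hy₂ b)) (hW (sub_le_sub_left hy₁ b))

lemma Gam_eq_Gam_add (hW : Monotone W) (hg : LocallyIntegrable g) (a₁ a₂ b : ℝ) :
    Gam W g CU CD a₁ b = Gam W g CU CD a₂ b + ∫ y in a₁..a₂, W (b - y) * g y := by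
  rw [Gam, Gam, ← intervalIntegral.integral_add_adjacent_intervals
    (intervalIntegrable_kernel_mul hW hg b a₁ a₂) (intervalIntegrable_kernel_mul hW hg b a₂ b)]
  ring

lemma Gam_lt_Gam_of_lt {c a₁ a₂ b : ℝ} (hW : Monotone W) (hpos : ∀ x, 0 < x → 0 < W x)
    (hg : LocallyIntegrable g) (hg_neg : ∀ᵐ y, y < c → g y < 0)
    (h12 : a₁ < a₂) (h2c : a₂ < c) (h2b : a₂ < b) :
    Gam W g CU CD a₁ b < Gam W g CU CD a₂ b := by
  have hint : 0 < ∫ y in a₁..a₂, -(W (b - y) * g y) := by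
    refine integral_pos_of_ae_pos_on (intervalIntegrable_kernel_mul hW hg b a₁ a₂).neg ?_ h12
    filter_upwards [hg_neg] with y hy hmem
    rw [neg_mul_eq_mul_neg]
    exact mul_pos (hpos _ (sub_pos.2 (hmem.2.trans h2b))) (neg_pos.2 (hy (hmem.2.trans h2c)))
  rw [intervalIntegral.integral_neg] at hint
  linarith [Gam_eq_Gam_add (CU := CU) (CD := CD) hW hg a₁ a₂ b]

lemma continuousAt_Gam (hneg : ∀ x, x < 0 → W x = 0) (hcont : ContinuousOn W (Ici 0))
    (hW : Monotone W) (hg : LocallyIntegrable g) {a b : ℝ} (hab : a < b) :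
    ContinuousAt (Gam W g CU CD a) b := by
  set c := b + 1
  -- `W (t - y)` vanishes for `y > t`, so near `b` the integral may be taken over the fixed
  -- interval `a..c`, and then dominated convergence applies.
  have hext : ∀ t ∈ Ioo a c, Gam W g CU CD a t = CD + CU + ∫ y in a..c, W (t - y) * g y := by
    rintro t ⟨-, htc⟩
    rw [Gam, ← intervalIntegral.integral_add_adjacent_intervals
      (intervalIntegrable_kernel_mul hW hg t a t) (intervalIntegrable_kernel_mul hW hg t t c),
      intervalIntegral.integral_zero_ae (a := t) (b := c), add_zero]
    refine ae_of_all _ fun y hy => ?_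
    rw [uIoc_of_le htc.le] at hy
    rw [hneg _ (sub_neg.2 hy.1), zero_mul]
  have hI : ContinuousAt (fun t => ∫ y in a..c, W (t - y) * g y) b := by
    refine intervalIntegral.continuousAt_of_dominated_interval
      (bound := fun y => W (c - a) * ‖g y‖)
      (Eventually.of_forall fun t => (intervalIntegrable_kernel_mul hW hg t a c).def'.1) ?_ ?_ ?_
    · filter_upwards [Iio_mem_nhds (lt_add_one b)] with t ht
      refine ae_of_all _ fun y hy => ?_
      rw [uIoc_of_le (hab.trans (lt_add_one b)).le] at hy
      rw [norm_mul, Real.norm_of_nonneg (nonneg_of_monotone hneg hW _)]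
      exact mul_le_mul_of_nonneg_right (hW (by linarith [hy.1, show t < c from ht]))
        (norm_nonneg _)
    · exact ((hg.integrableOn_isCompact isCompact_uIcc).intervalIntegrable.norm.const_mul _)
    · filter_upwards [(countable_singleton b).ae_notMem volume] with y hy _
      exact ((continuousAt_of_ne_zero hneg hcont (sub_ne_zero.2 (Ne.symm hy))).comp
        (f := fun t => t - y) (continuousAt_id.sub continuousAt_const)).mul continuousAt_const
  exact (continuousAt_const.add hI).congr
    (eventually_of_mem (Ioo_mem_nhds hab (lt_add_one b)) fun t ht => (hext t ht).symm)

end Gam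

lemma strictMonoOn_Ici_of_threshold_le {F : ℝ → ℝ} {T : EReal} {b : ℝ}
    (hF : ∀ b₁ b₂ : ℝ, T < b₁ → b₁ < b₂ → F b₁ < F b₂) (hT : T ≤ b)
    (hc : ContinuousWithinAt F (Ioi b) b) : StrictMonoOn F (Ici b) := by
  have hIoi : StrictMonoOn F (Ioi b) := fun x hx y _ hxy =>
    hF x y (hT.trans_lt (EReal.coe_lt_coe_iff.2 hx)) hxy
  intro x hx y hy hxy
  rcases (mem_Ici.1 hx).eq_or_lt with rfl | hbx
  · obtain ⟨m, hxm, hmy⟩ := exists_between hxy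
    calc F b ≤ F m := le_of_tendsto hc (by
          filter_upwards [Ioo_mem_nhdsGT hxm] with t ht
          exact (hIoi ht.1 hxm ht.2).le)
      _ < F y := hIoi hxm (hxm.trans hmy) hmy
  · exact hIoi hbx (hbx.trans hxy) hxy

section RootCurve

variable {Γ : ℝ → ℝ → ℝ} {abar : ℝ}

lemma lt_of_root_of_pos (hleft : ∀ a₁ a₂ b, a₁ < a₂ → a₂ < abar → a₂ < b → Γ a₁ b < Γ a₂ b)
    {a a₀ b : ℝ} (ha : a < min abar b) (hroot : Γ a b = 0) (hpos : 0 < Γ a₀ b) : a < a₀ := by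
  by_contra! h
  rcases h.eq_or_lt with rfl | h
  · linarith
  · linarith [hleft a₀ a b h (lt_min_iff.1 ha).1 (lt_min_iff.1 ha).2]

theorem root_strictAnti_and_threshold_le
    (hleft : ∀ a₁ a₂ b, a₁ < a₂ → a₂ < abar → a₂ < b → Γ a₁ b < Γ a₂ b)
    (hcont : ∀ a b, a < b → ContinuousWithinAt (Γ a) (Ioi b) b)
    {btil : ℝ → EReal}
    (hdec : ∀ a < abar, ∀ b₁ b₂ : ℝ, a < b₁ → b₁ ≤ b₂ → (b₂ : EReal) < btil a →
      Γ a b₂ ≤ Γ a b₁)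
    (hinc : ∀ a < abar, ∀ b₁ b₂ : ℝ, btil a < (b₁ : EReal) → b₁ < b₂ → Γ a b₁ < Γ a b₂)
    {astar bstar : ℝ} (hsa : astar < abar) (hsb : astar < bstar)
    (hthr : btil astar ≤ bstar) (hroot : Γ astar bstar = 0)
    {ab : ℝ → ℝ} (hab : ∀ b : ℝ, ab b < min abar b ∧ Γ (ab b) b = 0) :
    (∀ b b' : ℝ, bstar < b' → b' < b → ab b < ab b' ∧ ab b' < astar) ∧
    (∀ b : ℝ, bstar < b → btil (ab b) ≤ (b : EReal) ∧
      StrictMonoOn (fun b2 => Γ (ab b) b2) (Ioi b)) := by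
  have hab_lt : ∀ b, ab b < abar ∧ ab b < b := fun b => lt_min_iff.1 (hab b).1
  have hmono : ∀ a b, a < abar → a < b → btil a ≤ b → StrictMonoOn (Γ a) (Ici b) :=
    fun a b ha hlt hT => strictMonoOn_Ici_of_threshold_le (hinc a ha) hT (hcont a b hlt)
  have hab_lt_star : ∀ b, bstar < b → ab b < astar := fun b hb =>
    lt_of_root_of_pos hleft (hab b).1 (hab b).2
      (hroot ▸ hmono astar bstar hsa hsb hthr self_mem_Ici hb.le hb)
  have hthr_ab : ∀ b, bstar < b → btil (ab b) ≤ b := by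
    intro b hb
    by_contra! hlt
    have hneg : Γ (ab b) bstar < 0 := hroot ▸ hleft _ _ _ (hab_lt_star b hb) hsa hsb
    linarith [(hab b).2,
      hdec (ab b) (hab_lt b).1 bstar b ((hab_lt_star b hb).trans hsb) hb.le hlt]
  have hmono_ab : ∀ b, bstar < b → StrictMonoOn (Γ (ab b)) (Ici b) := fun b hb =>
    hmono _ _ (hab_lt b).1 (hab_lt b).2 (hthr_ab b hb)
  refine ⟨fun b b' hb' hb => ⟨?_, hab_lt_star b' hb'⟩,
    fun b hb => ⟨hthr_ab b hb, (hmono_ab b hb).mono Ioi_subset_Ici_self⟩⟩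
  exact lt_of_root_of_pos hleft (hab b).1 (hab b).2
    ((hab b').2 ▸ hmono_ab b' hb' self_mem_Ici hb.le hb)

end RootCurve

theorem stmt9_general
    (f g : ℝ → ℝ) (abar : ℝ)
    (hf_pw : ∃ D : Set ℝ, D.Countable ∧ ∀ x ∉ D, HasDerivAt f (g x) x ∧ ContinuousAt g x)
    (hg_meas : Measurable g)
    (hg_poly : ∃ C : ℝ, ∃ n : ℕ, ∀ x : ℝ, |g x| ≤ C * (1 + |x|) ^ n)
    (hf_dec : StrictAntiOn f (Set.Iio abar))
    (hf_conv : ConvexOn ℝ (Set.Iio abar) f)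
    (W : ℝ → ℝ)
    (hW_neg : ∀ x, x < 0 → W x = 0)
    (hW_cont : ContinuousOn W (Set.Ici 0))
    (hW_mono : StrictMonoOn W (Set.Ici 0))
    (hW_pos : ∀ x, 0 < x → 0 < W x)
    (CU CD : ℝ)
    -- the unimodality condition (Assumption 5.1 of the paper), with threshold `b̃(a) ∈ (a, ∞]`
    (btil : ℝ → EReal)
    (hbtil : ∀ a : ℝ, a < abar → (a : EReal) < btil a ∧
      (∀ b₁ b₂ : ℝ, a < b₁ → b₁ ≤ b₂ → (b₂ : EReal) < btil a →
        Gam W g CU CD a b₂ ≤ Gam W g CU CD a b₁) ∧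
      (∀ b₁ b₂ : ℝ, btil a < (b₁ : EReal) → b₁ < b₂ →
        Gam W g CU CD a b₁ < Gam W g CU CD a b₂))
    -- a Case-1 pair (a*, b*)
    (astar bstar : ℝ)
    (h₂ : astar < abar) (h₃ : abar < bstar)
    (h₄ : (bstar : EReal) = btil astar)
    (h₅ : Gam W g CU CD astar bstar = 0)
    -- the function b ↦ a(b): the unique root of Γ(·, b) below min(ā, b)
    (ab : ℝ → ℝ)
    (hab : ∀ b : ℝ, ab b < min abar b ∧ Gam W g CU CD (ab b) b = 0) :
    (∀ b b' : ℝ, bstar < b' → b' < b → ab b < ab b' ∧ ab b' < astar) ∧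
    (∀ b : ℝ, bstar < b → btil (ab b) ≤ (b : EReal) ∧
      StrictMonoOn (fun b2 => Gam W g CU CD (ab b) b2) (Set.Ioi b)) := by
  obtain ⟨D, hDc, hD⟩ := hf_pw
  have hW : Monotone W := monotone_of_monotoneOn_Ici hW_neg hW_cont hW_mono.monotoneOn hW_pos
  have hg : LocallyIntegrable g := locallyIntegrable_of_abs_le_pow hg_meas hg_poly
  have hg_neg : ∀ᵐ y, y < abar → g y < 0 := by
    filter_upwards [hDc.ae_notMem volume] with y hyD hy
    exact hf_conv.neg_of_hasDerivAt_of_strictAntiOn_s9 hf_dec hy (hD y hyD).1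
  exact root_strictAnti_and_threshold_le (Γ := Gam W g CU CD)
    (fun _ _ _ h12 h2c h2b => Gam_lt_Gam_of_lt hW hW_pos hg hg_neg h12 h2c h2b)
    (fun _ _ hab => (continuousAt_Gam hW_neg hW_cont hW hg hab).continuousWithinAt)
    (fun a ha => (hbtil a ha).2.1) (fun a ha => (hbtil a ha).2.2)
    h₂ (h₂.trans h₃) h₄.ge h₅ hab

theorem stmt9
    (Φ : ℝ) (hΦ : 0 < Φ)
    (f g : ℝ → ℝ) (abar c₀ x₀ : ℝ)
    (hf_cont : Continuous f)
    (hf_pw : ∃ D : Set ℝ, D.Countable ∧ ∀ x ∉ D, HasDerivAt f (g x) x ∧ ContinuousAt g x)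
    (hg_meas : Measurable g)
    (hf_poly : ∃ C : ℝ, ∃ n : ℕ, ∀ x : ℝ, |f x| ≤ C * (1 + |x|) ^ n)
    (hg_poly : ∃ C : ℝ, ∃ n : ℕ, ∀ x : ℝ, |g x| ≤ C * (1 + |x|) ^ n)
    (hf_inc : StrictMonoOn f (Set.Ioi abar))
    (hf_dec : StrictAntiOn f (Set.Iio abar))
    (hf_conv : ConvexOn ℝ (Set.Iio abar) f)
    (hc₀ : 0 < c₀) (hx₀ : abar ≤ x₀)
    (hg_ge : ∀ x, x₀ ≤ x → c₀ ≤ g x)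
    (W : ℝ → ℝ)
    (hW_neg : ∀ x, x < 0 → W x = 0)
    (hW_cont : ContinuousOn W (Set.Ici 0))
    (hW_mono : StrictMonoOn W (Set.Ici 0))
    (hW_pos : ∀ x, 0 < x → 0 < W x)
    (CU CD : ℝ) (hC : 0 < CU + CD)
    (aund : ℝ) (h_aund_lt : aund < abar) (h_aund : Psi Φ g aund = 0)
    -- the unimodality condition (Assumption 5.1 of the paper), with threshold `b̃(a) ∈ (a, ∞]`
    (btil : ℝ → EReal)
    (hbtil : ∀ a : ℝ, a < abar → (a : EReal) < btil a ∧
      (∀ b₁ b₂ : ℝ, a < b₁ → b₁ ≤ b₂ → (b₂ : EReal) < btil a →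
        Gam W g CU CD a b₂ ≤ Gam W g CU CD a b₁) ∧
      (∀ b₁ b₂ : ℝ, btil a < (b₁ : EReal) → b₁ < b₂ →
        Gam W g CU CD a b₁ < Gam W g CU CD a b₂))
    -- a Case-1 pair (a*, b*)
    (astar bstar : ℝ)
    (h₁ : aund < astar) (h₂ : astar < abar) (h₃ : abar < bstar)
    (h₄ : (bstar : EReal) = btil astar)
    (h₅ : Gam W g CU CD astar bstar = 0)
    (h₆ : ∀ x, astar ≤ x → 0 ≤ Gam W g CU CD astar x)
    -- the function b ↦ a(b): the unique root of Γ(·, b) below min(ā, b)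
    (ab : ℝ → ℝ)
    (hab : ∀ b : ℝ, ab b < min abar b ∧ Gam W g CU CD (ab b) b = 0) :
    (∀ b b' : ℝ, bstar < b' → b' < b → ab b < ab b' ∧ ab b' < astar) ∧
    (∀ b : ℝ, bstar < b → btil (ab b) ≤ (b : EReal) ∧
      StrictMonoOn (fun b2 => Gam W g CU CD (ab b) b2) (Set.Ioi b)) :=
  stmt9_general f g abar hf_pw hg_meas hg_poly hf_dec hf_conv W hW_neg hW_cont hW_mono hW_pos CU CD
    btil hbtil astar bstar h₂ h₃ h₄ h₅ ab hab
end

section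
/- Define g : ℝ → ℝ by g(y) := −C_U for y ≤ a*, g(y) := C_D − Γ(a*, y) for a* ≤ y ≤ b*, and g(y) := C_D for y ≥ b*. Then g is well defined (the three formulas agree at y = a* and y = b*) and g is nondecreasing on ℝ; moreover −C_U ≤ g(y) ≤ C_D for all y. (Here g is the derivative of the candidate value function v_{a*,b*}, so this expresses the convexity of v_{a*,b*} stated in Lemma 5.5 of the paper.) -/
/-! Since `f̃` decreases on `(-∞, ā)`, `f̃' ≤ 0` almost everywhere there, so the integral in
`Γ(a*, b)` is nonpositive and `Γ(a*, b) ≤ Γ(a*, a*) = C_D + C_U` for `a* ≤ b < ā`. Unimodality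
makes `Γ(a*, ·)` nonincreasing on the open interval `(a*, b*)`; the bound near `a*` and
`Γ(a*, b*) = 0 ≤ Γ(a*, ·)` extend this to `[a*, b*]`. Hence `g = C_D - Γ(a*, ·)` is nondecreasing
there, glues to the constants `-C_U` and `C_D` outside, and the bounds follow from monotonicity. -/

open MeasureTheory Filter Set

theorem HasDerivAt.nonpos_of_antitoneOn_Iio {f : ℝ → ℝ} {f' x c : ℝ} (hd : HasDerivAt f f' x)
    (hf : AntitoneOn f (Iio c)) (hx : x < c) : f' ≤ 0 := by
  have hacc : AccPt x (𝓟 (Iio c)) := accPt_principal_iff_nhdsWithin.2 <|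
    (nhdsLT_neBot x).mono <| nhdsWithin_mono x fun y hy => ⟨(mem_Iio.1 hy).trans hx, hy.ne⟩
  exact hd.hasDerivWithinAt.nonpos_of_antitoneOn hacc hf

theorem ae_nonpos_of_hasDerivAt_of_antitoneOn_Iio {f g : ℝ → ℝ} {c : ℝ}
    (hf : ∃ D : Set ℝ, D.Countable ∧ ∀ x ∉ D, HasDerivAt f (g x) x) (hanti : AntitoneOn f (Iio c)) :
    ∀ᵐ y, y < c → g y ≤ 0 := by
  obtain ⟨D, hDc, hD⟩ := hf
  filter_upwards [hDc.ae_notMem volume] with y hy hyc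
  exact (hD y hy).nonpos_of_antitoneOn_Iio hanti hyc

theorem Gam_self (W g : ℝ → ℝ) (CU CD a : ℝ) : Gam W g CU CD a a = CD + CU := by
  simp [Gam]

theorem Gam_le_Gam_self_of_ae_nonpos {W g : ℝ → ℝ} {CU CD a b : ℝ} (hab : a ≤ b)
    (hW : ∀ x, 0 < x → 0 ≤ W x) (hg : ∀ᵐ y, y < b → g y ≤ 0) :
    Gam W g CU CD a b ≤ Gam W g CU CD a a := by
  have hint : 0 ≤ ∫ y in a..b, -(W (b - y) * g y) := by
    refine intervalIntegral.integral_nonneg_of_ae_restrict hab ?_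
    filter_upwards [ae_restrict_mem measurableSet_Icc, ae_restrict_of_ae hg,
      ae_restrict_of_ae (volume.ae_ne b)] with y hy hgy hyb
    have hyb' : y < b := lt_of_le_of_ne hy.2 hyb
    exact neg_nonneg.2 <| mul_nonpos_of_nonneg_of_nonpos (hW _ (sub_pos.2 hyb')) (hgy hyb')
  rw [intervalIntegral.integral_neg] at hint
  rw [Gam_self, Gam]
  linarith

theorem AntitoneOn.Icc_of_Ioo {α β : Type*} [LinearOrder α] [DenselyOrdered α] [Preorder β]
    {φ : α → β} {a b : α} (h : AntitoneOn φ (Ioo a b)) (ha : ∀ y ∈ Ioo a b, φ y ≤ φ a)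
    (hb : ∀ y ∈ Ioo a b, φ b ≤ φ y) : AntitoneOn φ (Icc a b) := by
  rintro x ⟨hax, -⟩ y ⟨-, hyb⟩ hxy
  obtain rfl | hax := hax.eq_or_lt <;> obtain rfl | hyb := hyb.eq_or_lt
  · obtain rfl | hxy := hxy.eq_or_lt
    · exact le_rfl
    obtain ⟨m, hm⟩ := exists_between hxy
    exact (hb m hm).trans (ha m hm)
  · obtain rfl | hxy := hxy.eq_or_lt
    · exact le_rfl
    exact ha y ⟨hxy, hyb⟩
  · obtain rfl | hxy := hxy.eq_or_lt
    · exact le_rfl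
    exact hb x ⟨hax, hxy⟩
  · exact h ⟨hax, hxy.trans_lt hyb⟩ ⟨hax.trans_le hxy, hyb⟩ hxy

theorem monotone_of_const_Iic_of_monotoneOn_Icc_of_const_Ici {α β : Type*} [LinearOrder α]
    [Preorder β] {G : α → β} {a b : α} {c d : β} (hab : a ≤ b) (hlo : ∀ y ≤ a, G y = c)
    (hmid : MonotoneOn G (Icc a b)) (hhi : ∀ y, b ≤ y → G y = d) : Monotone G := by
  have hIic : MonotoneOn G (Iic a) := fun x hx y hy _ => (hlo x hx).trans (hlo y hy).symm |>.le
  have hIci : MonotoneOn G (Ici b) := fun x hx y hy _ => (hhi x hx).trans (hhi y hy).symm |>.le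
  have hIicb : MonotoneOn G (Iic b) := by
    rw [← Iic_union_Icc_eq_Iic hab]
    exact hIic.union_right hmid isGreatest_Iic (isLeast_Icc hab)
  rw [← monotoneOn_univ, ← Iic_union_Ici]
  exact hIicb.union_right hIci isGreatest_Iic isLeast_Ici

theorem stmt12_general
    (f g : ℝ → ℝ) (abar : ℝ)
    (hf_pw : ∃ D : Set ℝ, D.Countable ∧ ∀ x ∉ D, HasDerivAt f (g x) x ∧ ContinuousAt g x)
    (hf_dec : StrictAntiOn f (Set.Iio abar))
    (W : ℝ → ℝ)
    (hW_pos : ∀ x, 0 < x → 0 < W x)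
    (CU CD : ℝ)
    -- the unimodality condition (Assumption 5.1 of the paper), with threshold `b̃(a) ∈ (a, ∞]`
    (btil : ℝ → EReal)
    (hbtil : ∀ a : ℝ, a < abar → (a : EReal) < btil a ∧
      (∀ b₁ b₂ : ℝ, a < b₁ → b₁ ≤ b₂ → (b₂ : EReal) < btil a →
        Gam W g CU CD a b₂ ≤ Gam W g CU CD a b₁) ∧
      (∀ b₁ b₂ : ℝ, btil a < (b₁ : EReal) → b₁ < b₂ →
        Gam W g CU CD a b₁ < Gam W g CU CD a b₂))
    -- a Case-1 pair (a*, b*)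
    (astar bstar : ℝ)
    (h₂ : astar < abar) (h₃ : abar < bstar)
    (h₄ : (bstar : EReal) = btil astar)
    (h₅ : Gam W g CU CD astar bstar = 0)
    (h₆ : ∀ x, astar ≤ x → 0 ≤ Gam W g CU CD astar x) :
    -- conclusion: the derivative `g = v'_{a*,b*}` of the candidate value function is
    -- well defined (the three formulas agree at `a*` and `b*`) and nondecreasing,
    -- with `-C_U ≤ g ≤ C_D`
    (CD - Gam W g CU CD astar astar = -CU) ∧
    (CD - Gam W g CU CD astar bstar = CD) ∧
    (∀ G : ℝ → ℝ,
      (∀ y, y ≤ astar → G y = -CU) →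
      (∀ y, astar ≤ y → y ≤ bstar → G y = CD - Gam W g CU CD astar y) →
      (∀ y, bstar ≤ y → G y = CD) →
      Monotone G ∧ ∀ y, -CU ≤ G y ∧ G y ≤ CD) := by
  have hg_nonpos : ∀ᵐ y, y < abar → g y ≤ 0 :=
    ae_nonpos_of_hasDerivAt_of_antitoneOn_Iio
      (hf_pw.imp fun _ hD => ⟨hD.1, fun x hx => (hD.2 x hx).1⟩) hf_dec.antitoneOn
  have hΓ_Ioo : AntitoneOn (Gam W g CU CD astar) (Ioo astar bstar) := fun y₁ hy₁ y₂ hy₂ h =>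
    (hbtil astar h₂).2.1 y₁ y₂ hy₁.1 h (h₄ ▸ EReal.coe_lt_coe_iff.2 hy₂.2)
  have hΓ_left : ∀ y ∈ Ioo astar bstar, Gam W g CU CD astar y ≤ Gam W g CU CD astar astar := by
    intro y hy
    set m := min y ((astar + abar) / 2)
    have hm : m ∈ Ioo astar bstar := ⟨lt_min hy.1 (by linarith), (min_le_left _ _).trans_lt hy.2⟩
    have hm_lt : m < abar := (min_le_right _ _).trans_lt (by linarith)
    calc _ ≤ Gam W g CU CD astar m := hΓ_Ioo hm hy (min_le_left _ _)
      _ ≤ _ := Gam_le_Gam_self_of_ae_nonpos hm.1.le (fun x hx => (hW_pos x hx).le)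
          (hg_nonpos.mono fun _ hg hz => hg (hz.trans hm_lt))
  have hΓ : AntitoneOn (Gam W g CU CD astar) (Icc astar bstar) :=
    hΓ_Ioo.Icc_of_Ioo hΓ_left fun y hy => h₅ ▸ h₆ y hy.1.le
  refine ⟨by rw [Gam_self]; ring, by rw [h₅]; ring, fun G hlo hmid hhi => ?_⟩
  have hG : Monotone G := monotone_of_const_Iic_of_monotoneOn_Icc_of_const_Ici (h₂.trans h₃).le hlo
    (fun x hx y hy hxy => by rw [hmid x hx.1 hx.2, hmid y hy.1 hy.2]; linarith [hΓ hx hy hxy]) hhi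
  refine ⟨hG, fun y => ⟨?_, ?_⟩⟩
  · calc -CU = G (min y astar) := (hlo _ (min_le_right _ _)).symm
      _ ≤ G y := hG (min_le_left _ _)
  · calc G y ≤ G (max y bstar) := hG (le_max_left _ _)
      _ = CD := hhi _ (le_max_right _ _)

theorem stmt12
    (Φ : ℝ) (hΦ : 0 < Φ)
    (f g : ℝ → ℝ) (abar c₀ x₀ : ℝ)
    (hf_cont : Continuous f)
    (hf_pw : ∃ D : Set ℝ, D.Countable ∧ ∀ x ∉ D, HasDerivAt f (g x) x ∧ ContinuousAt g x)
    (hg_meas : Measurable g)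
    (hf_poly : ∃ C : ℝ, ∃ n : ℕ, ∀ x : ℝ, |f x| ≤ C * (1 + |x|) ^ n)
    (hg_poly : ∃ C : ℝ, ∃ n : ℕ, ∀ x : ℝ, |g x| ≤ C * (1 + |x|) ^ n)
    (hf_inc : StrictMonoOn f (Set.Ioi abar))
    (hf_dec : StrictAntiOn f (Set.Iio abar))
    (hf_conv : ConvexOn ℝ (Set.Iio abar) f)
    (hc₀ : 0 < c₀) (hx₀ : abar ≤ x₀)
    (hg_ge : ∀ x, x₀ ≤ x → c₀ ≤ g x)
    (W : ℝ → ℝ)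
    (hW_neg : ∀ x, x < 0 → W x = 0)
    (hW_cont : ContinuousOn W (Set.Ici 0))
    (hW_mono : StrictMonoOn W (Set.Ici 0))
    (hW_pos : ∀ x, 0 < x → 0 < W x)
    (CU CD : ℝ) (hC : 0 < CU + CD)
    (aund : ℝ) (h_aund_lt : aund < abar) (h_aund : Psi Φ g aund = 0)
    -- the unimodality condition (Assumption 5.1 of the paper), with threshold `b̃(a) ∈ (a, ∞]`
    (btil : ℝ → EReal)
    (hbtil : ∀ a : ℝ, a < abar → (a : EReal) < btil a ∧
      (∀ b₁ b₂ : ℝ, a < b₁ → b₁ ≤ b₂ → (b₂ : EReal) < btil a →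
        Gam W g CU CD a b₂ ≤ Gam W g CU CD a b₁) ∧
      (∀ b₁ b₂ : ℝ, btil a < (b₁ : EReal) → b₁ < b₂ →
        Gam W g CU CD a b₁ < Gam W g CU CD a b₂))
    -- a Case-1 pair (a*, b*)
    (astar bstar : ℝ)
    (h₁ : aund < astar) (h₂ : astar < abar) (h₃ : abar < bstar)
    (h₄ : (bstar : EReal) = btil astar)
    (h₅ : Gam W g CU CD astar bstar = 0)
    (h₆ : ∀ x, astar ≤ x → 0 ≤ Gam W g CU CD astar x) :
    -- conclusion: the derivative `g = v'_{a*,b*}` of the candidate value function is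
    -- well defined (the three formulas agree at `a*` and `b*`) and nondecreasing,
    -- with `-C_U ≤ g ≤ C_D`
    (CD - Gam W g CU CD astar astar = -CU) ∧
    (CD - Gam W g CU CD astar bstar = CD) ∧
    (∀ G : ℝ → ℝ,
      (∀ y, y ≤ astar → G y = -CU) →
      (∀ y, astar ≤ y → y ≤ bstar → G y = CD - Gam W g CU CD astar y) →
      (∀ y, bstar ≤ y → G y = CD) →
      Monotone G ∧ ∀ y, -CU ≤ G y ∧ G y ≤ CD) :=
  stmt12_general f g abar hf_pw hf_dec W hW_pos CU CD btil hbtil astar bstar h₂ h₃ h₄ h₅ h₆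
end

section
/- For every a ≤ 0, lim_{b→∞} [ W̄(b) − e^{Φa} W̄(b − a) ] = (e^{Φa} − 1)/q. -/
/-!
For `b ≥ 0`, `W̄(b) = (κ/Φ) e^{Φb} - H(b)` with `H(b) = κ/Φ + ∫_0^b û → κ/Φ + (1/q - κ/Φ) = 1/q`.
In `W̄(b) - e^{Φa} W̄(b - a)` the exponential parts cancel exactly, leaving
`e^{Φa} H(b - a) - H(b) → (e^{Φa} - 1)/q`.
-/

open MeasureTheory Filter Set

theorem integral_exp_const_mul {Φ : ℝ} (hΦ : Φ ≠ 0) (b : ℝ) :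
    ∫ y in (0:ℝ)..b, Real.exp (Φ * y) = (Real.exp (Φ * b) - 1) / Φ := by
  rw [intervalIntegral.integral_comp_mul_left (fun y => Real.exp y) hΦ, integral_exp,
    mul_zero, Real.exp_zero, smul_eq_mul, inv_mul_eq_div]

theorem intervalIntegral_eq_const_mul_exp_sub {Φ κ b : ℝ} (hΦ : Φ ≠ 0) (hb : 0 ≤ b)
    {u W : ℝ → ℝ}
    (hu : IntegrableOn u (Ici 0)) (hW : ∀ y, 0 ≤ y → W y = κ * Real.exp (Φ * y) - u y) :
    ∫ y in (0:ℝ)..b, W y = κ / Φ * Real.exp (Φ * b) - (κ / Φ + ∫ y in (0:ℝ)..b, u y) := by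
  have hu' : IntervalIntegrable u volume 0 b :=
    (intervalIntegrable_iff_integrableOn_Icc_of_le hb).2 (hu.mono_set Icc_subset_Ici_self)
  have hexp : IntervalIntegrable (fun y => κ * Real.exp (Φ * y)) volume 0 b := by
    apply Continuous.intervalIntegrable
    fun_prop
  rw [intervalIntegral.integral_congr (g := fun y => κ * Real.exp (Φ * y) - u y)
      fun y hy => hW y (uIcc_of_le hb ▸ hy).1,
    intervalIntegral.integral_sub hexp hu', intervalIntegral.integral_const_mul,
    integral_exp_const_mul hΦ]
  ring

theorem tendsto_sub_exp_mul_comp_sub {G H : ℝ → ℝ} {c Φ L : ℝ}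
    (hG : ∀ᶠ b in atTop, G b = c * Real.exp (Φ * b) - H b) (hH : Tendsto H atTop (nhds L))
    (a : ℝ) :
    Tendsto (fun b => G b - Real.exp (Φ * a) * G (b - a)) atTop
      (nhds ((Real.exp (Φ * a) - 1) * L)) := by
  have hshift : Tendsto (fun b => b - a) atTop atTop := tendsto_atTop_add_const_right _ _ tendsto_id
  have hlim : Tendsto (fun b => Real.exp (Φ * a) * H (b - a) - H b) atTop
      (nhds (Real.exp (Φ * a) * L - L)) :=
    (tendsto_const_nhds.mul (hH.comp hshift)).sub hH
  rw [sub_one_mul]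
  refine hlim.congr' ?_
  filter_upwards [hG, hshift.eventually hG] with b hb hba
  have hexp : Real.exp (Φ * a) * Real.exp (Φ * (b - a)) = Real.exp (Φ * b) := by
    rw [← Real.exp_add]; ring_nf
  rw [hb, hba]
  linear_combination c * hexp

theorem stmt13_general
    (Φ q κ : ℝ) (hΦ : 0 < Φ)
    (uhat : ℝ → ℝ)
    (h_int : IntegrableOn uhat (Set.Ici 0))
    (h_val : ∫ y in Set.Ici 0, uhat y = 1 / q - κ / Φ)
    (W : ℝ → ℝ)
    (hW : ∀ y, 0 ≤ y → W y = κ * Real.exp (Φ * y) - uhat y) :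
    ∀ a : ℝ, a ≤ 0 →
      Tendsto (fun b => (∫ y in (0:ℝ)..b, W y) -
          Real.exp (Φ * a) * ∫ y in (0:ℝ)..(b - a), W y)
        atTop (nhds ((Real.exp (Φ * a) - 1) / q)) := by
  intro a _
  have hu : Tendsto (fun b => ∫ y in (0:ℝ)..b, uhat y) atTop (nhds (1 / q - κ / Φ)) := by
    rw [← h_val, integral_Ici_eq_integral_Ioi]
    exact intervalIntegral_tendsto_integral_Ioi 0 (h_int.mono_set Ioi_subset_Ici_self) tendsto_id
  have hH : Tendsto (fun b => κ / Φ + ∫ y in (0:ℝ)..b, uhat y) atTop (nhds (1 / q)) := by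
    convert tendsto_const_nhds.add hu using 2
    ring
  have hG : ∀ᶠ b in atTop, ∫ y in (0:ℝ)..b, W y
      = κ / Φ * Real.exp (Φ * b) - (κ / Φ + ∫ y in (0:ℝ)..b, uhat y) :=
    (eventually_ge_atTop 0).mono fun b hb =>
      intervalIntegral_eq_const_mul_exp_sub hΦ.ne' hb h_int hW
  rw [div_eq_mul_one_div]
  exact tendsto_sub_exp_mul_comp_sub hG hH a

/-- For the scale-function decomposition `W(y) = κ e^{Φy} - û(y)` (with `û` integrable of
total integral `1/q - κ/Φ`), for every `a ≤ 0`,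
`W̄(b) - e^{Φa} W̄(b-a) → (e^{Φa} - 1)/q` as `b → ∞`. -/
theorem stmt13
    (Φ q κ : ℝ) (hΦ : 0 < Φ) (hq : 0 < q) (hκ : 0 < κ)
    (uhat : ℝ → ℝ)
    (h_int : IntegrableOn uhat (Set.Ici 0))
    (h_val : ∫ y in Set.Ici 0, uhat y = 1 / q - κ / Φ)
    (W : ℝ → ℝ)
    (hW : ∀ y, 0 ≤ y → W y = κ * Real.exp (Φ * y) - uhat y)
    (hW_neg : ∀ y, y < 0 → W y = 0) :
    ∀ a : ℝ, a ≤ 0 →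
      Tendsto (fun b => (∫ y in (0:ℝ)..b, W y) -
          Real.exp (Φ * a) * ∫ y in (0:ℝ)..(b - a), W y)
        atTop (nhds ((Real.exp (Φ * a) - 1) / q)) :=
  stmt13_general Φ q κ hΦ uhat h_int h_val W hW
end

section
/- lim_{b→∞} Γ(a̲, b)/b = −2α⁺/q; in particular Γ(a̲, b) → −∞ as b → ∞, so for the quadratic running cost Case 1 of the paper always holds (the curve b ↦ Γ(a̲, b) takes arbitrarily negative values). -/
open MeasureTheory Filter Set

/-!
Since `W(y) = κ e^{Φy} - û(y)`, `Γ(a, b)` splits into `κ e^{Φb} ∫_a^b e^{-Φy} f̃′(y) dy` and a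
convolution of `û` with `f̃′`. The equation `Ψ(a̲) = 0` says `∫_{a̲}^∞ e^{-Φy} f̃′(y) dy = 0`, so
the first part equals `-κ e^{Φb} ∫_b^∞ e^{-Φy} f̃′(y) dy`; for `b ≥ 0`, where `f̃′` is affine with
slope `2α⁺`, this is an affine function of `b` with slope `-2κα⁺/Φ`. Because `f̃′` grows linearly,
dominated convergence shows that the convolution part divided by `b` tends to
`2α⁺ ∫ û = 2α⁺ (1/q - κ/Φ)`. The two slopes add up to `-2α⁺/q`.
-/

open Real Topology Asymptotics

section ExpTail

variable {Φ : ℝ}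

theorem tendsto_exp_neg_mul_mul_affine (hΦ : 0 < Φ) (c d : ℝ) :
    Tendsto (fun y => exp (-(Φ * y)) * (c * y + d)) atTop (𝓝 0) := by
  have h1 := tendsto_rpow_mul_exp_neg_mul_atTop_nhds_zero 1 Φ hΦ
  have h0 := tendsto_rpow_mul_exp_neg_mul_atTop_nhds_zero 0 Φ hΦ
  have h := (h1.const_mul c).add (h0.const_mul d)
  rw [mul_zero, mul_zero, add_zero] at h
  refine h.congr fun y => ?_
  simp only [rpow_one, rpow_zero, neg_mul]
  ring

theorem integrableOn_exp_neg_mul_mul_affine (hΦ : 0 < Φ) (c d s : ℝ) :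
    IntegrableOn (fun y => exp (-(Φ * y)) * (c * y + d)) (Ioi s) := by
  refine integrable_of_isBigO_exp_neg (half_pos hΦ) (by fun_prop) <|
    isBigO_of_div_tendsto_nhds (.of_forall fun y h => absurd h (exp_pos _).ne') 0 ?_
  refine (tendsto_exp_neg_mul_mul_affine (half_pos hΦ) c d).congr fun y => ?_
  rw [Pi.div_apply, eq_div_iff (exp_pos _).ne', mul_right_comm, ← exp_add]
  ring_nf

theorem integral_Ioi_exp_neg_mul_mul_affine (hΦ : 0 < Φ) (c d s : ℝ) :
    ∫ y in Ioi s, exp (-(Φ * y)) * (c * y + d)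
      = exp (-(Φ * s)) * (c / Φ * s + (c / Φ ^ 2 + d / Φ)) := by
  have hderiv (x : ℝ) : HasDerivAt (fun y => -(exp (-(Φ * y)) * (c / Φ * y + (c / Φ ^ 2 + d / Φ))))
      (exp (-(Φ * x)) * (c * x + d)) x := by
    have := (((hasDerivAt_id x).const_mul Φ).neg.exp.mul
      (((hasDerivAt_id x).const_mul (c / Φ)).add_const (c / Φ ^ 2 + d / Φ))).neg
    refine this.congr_deriv ?_
    simp only [Pi.neg_apply, id]
    field_simp
    ring
  rw [integral_Ioi_of_hasDerivAt_of_tendsto' (fun x _ => hderiv x)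
    (integrableOn_exp_neg_mul_mul_affine hΦ c d s)
    (by simpa using (tendsto_exp_neg_mul_mul_affine hΦ (c / Φ) (c / Φ ^ 2 + d / Φ)).neg)]
  ring

end ExpTail

section QuadCost

/-- The paper's `f̃′` for the quadratic running cost, with `c = q C_U`. -/
noncomputable def quadCostDeriv (αm αp c x : ℝ) : ℝ :=
  2 * ((if x < 0 then αm else αp) * x) + c

variable {αm αp c : ℝ}

theorem quadCostDeriv_eq_min_max (x : ℝ) :
    quadCostDeriv αm αp c x = 2 * (αm * min x 0 + αp * max x 0) + c := by
  rcases lt_or_ge x 0 with hx | hx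
  · simp [quadCostDeriv, hx, hx.le]
  · simp [quadCostDeriv, hx, not_lt.2 hx]

theorem continuous_quadCostDeriv : Continuous (quadCostDeriv αm αp c) := by
  simp only [funext quadCostDeriv_eq_min_max]
  fun_prop

theorem quadCostDeriv_of_nonneg {x : ℝ} (hx : 0 ≤ x) :
    quadCostDeriv αm αp c x = 2 * αp * x + c := by
  simp [quadCostDeriv, not_lt.2 hx, mul_assoc]

theorem abs_quadCostDeriv_le (x : ℝ) :
    |quadCostDeriv αm αp c x| ≤ (2 * (|αm| + |αp|) + |c|) * (1 + |x|) := by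
  rw [quadCostDeriv_eq_min_max]
  have hmin : |min x 0| ≤ |x| := by cases min_cases x 0 <;> simp_all
  have hmax : |max x 0| ≤ |x| := by cases max_cases x 0 <;> simp_all
  calc _ ≤ 2 * (|αm| * |min x 0| + |αp| * |max x 0|) + |c| := by
        grw [abs_add_le, abs_mul, abs_add_le, abs_mul, abs_mul]; simp
    _ ≤ 2 * (|αm| * |x| + |αp| * |x|) + |c| := by gcongr
    _ ≤ _ := by nlinarith [abs_nonneg x, abs_nonneg αm, abs_nonneg αp, abs_nonneg c]

theorem tendsto_quadCostDeriv_div_atTop :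
    Tendsto (fun x => quadCostDeriv αm αp c x / x) atTop (𝓝 (2 * αp)) := by
  have h := tendsto_inv_atTop_zero.const_mul c |>.const_add (2 * αp)
  rw [mul_zero, add_zero] at h
  refine h.congr' ?_
  filter_upwards [eventually_gt_atTop 0] with x hx
  rw [quadCostDeriv_of_nonneg hx.le]
  field_simp

variable {Φ : ℝ}

theorem integral_Ioi_exp_neg_mul_quadCostDeriv (hΦ : 0 < Φ) {b : ℝ} (hb : 0 ≤ b) :
    ∫ y in Ioi b, exp (-(Φ * y)) * quadCostDeriv αm αp c y
      = exp (-(Φ * b)) * (2 * αp / Φ * b + (2 * αp / Φ ^ 2 + c / Φ)) := by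
  rw [← integral_Ioi_exp_neg_mul_mul_affine hΦ]
  refine setIntegral_congr_fun measurableSet_Ioi fun y hy => ?_
  rw [quadCostDeriv_of_nonneg (hb.trans hy.out.le)]

theorem integrableOn_exp_neg_mul_quadCostDeriv (hΦ : 0 < Φ) (s : ℝ) :
    IntegrableOn (fun y => exp (-(Φ * y)) * quadCostDeriv αm αp c y) (Ioi s) := by
  have hcont : Continuous fun y => exp (-(Φ * y)) * quadCostDeriv αm αp c y := by
    have := continuous_quadCostDeriv (αm := αm) (αp := αp) (c := c)
    fun_prop
  rw [← Ioc_union_Ioi_eq_Ioi (le_max_left s 0)]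
  refine (hcont.integrableOn_Icc.mono_set Ioc_subset_Icc_self).union ?_
  refine (integrableOn_exp_neg_mul_mul_affine hΦ (2 * αp) c _).congr_fun
    (fun y hy => ?_) measurableSet_Ioi
  rw [quadCostDeriv_of_nonneg ((le_max_right s 0).trans hy.out.le)]

end QuadCost

theorem Psi_eq_exp_mul_integral (Φ : ℝ) (g : ℝ → ℝ) (s : ℝ) :
    Psi Φ g s = exp (Φ * s) * ∫ y in Ioi s, exp (-(Φ * y)) * g y := by
  rw [Psi, ← integral_const_mul]
  refine setIntegral_congr_fun measurableSet_Ioi fun y _ => ?_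
  rw [← mul_assoc, ← exp_add]
  ring_nf

theorem intervalIntegral_exp_neg_mul_eq_neg_integral_Ioi {Φ a b : ℝ} {g : ℝ → ℝ}
    (hint : IntegrableOn (fun y => exp (-(Φ * y)) * g y) (Ioi a)) (hΨ : Psi Φ g a = 0)
    (hab : a ≤ b) :
    ∫ y in a..b, exp (-(Φ * y)) * g y = -∫ y in Ioi b, exp (-(Φ * y)) * g y := by
  have h0 : ∫ y in Ioi a, exp (-(Φ * y)) * g y = 0 := by
    simpa [Psi_eq_exp_mul_integral, (exp_pos _).ne'] using hΨ
  rw [← intervalIntegral.integral_Ioi_sub_Ioi hint hab, h0, zero_sub]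

theorem Gam_eq_of_decomposition {W g uhat : ℝ → ℝ} {Φ κ CU CD a b : ℝ} (hg : Continuous g)
    (hu : IntegrableOn uhat (Ici 0)) (hW : ∀ y, 0 ≤ y → W y = κ * exp (Φ * y) - uhat y)
    (hab : a ≤ b) :
    Gam W g CU CD a b = CD + CU + κ * exp (Φ * b) * (∫ y in a..b, exp (-(Φ * y)) * g y)
      - ∫ t in 0..(b - a), uhat t * g (b - t) := by
  have hu' : IntervalIntegrable uhat volume 0 (b - a) := by
    rw [intervalIntegrable_iff_integrableOn_Ioc_of_le (sub_nonneg.2 hab)]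
    exact hu.mono_set fun t ht => ht.1.le
  have hushift : IntervalIntegrable (fun y => uhat (b - y) * g y) volume a b := by
    have := (hu'.comp_sub_left b).symm
    rw [sub_zero, sub_sub_cancel] at this
    exact this.mul_continuousOn hg.continuousOn
  have hexp : IntervalIntegrable (fun y => κ * exp (Φ * b) * (exp (-(Φ * y)) * g y)) volume a b :=
    (by fun_prop : Continuous _).intervalIntegrable _ _
  have hshift : ∫ t in 0..(b - a), uhat t * g (b - t) = ∫ y in a..b, uhat (b - y) * g y := by
    simpa only [sub_sub_cancel, sub_self] using
      (intervalIntegral.integral_comp_sub_left (fun t => uhat t * g (b - t)) b (a := a) (b := b)).symm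
  rw [Gam, hshift, ← intervalIntegral.integral_const_mul, add_sub_assoc,
    ← intervalIntegral.integral_sub hexp hushift]
  congr 1
  refine intervalIntegral.integral_congr fun y hy => ?_
  rw [uIcc_of_le hab] at hy
  simp only [hW (b - y) (sub_nonneg.2 hy.2), mul_sub, sub_mul]
  rw [mul_assoc κ, mul_assoc κ, ← mul_assoc (exp _), ← exp_add]
  ring_nf

theorem tendsto_comp_sub_div_atTop {h : ℝ → ℝ} {L : ℝ}
    (hlim : Tendsto (fun x => h x / x) atTop (𝓝 L)) (t : ℝ) :
    Tendsto (fun b => h (b - t) / b) atTop (𝓝 L) := by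
  have hratio : Tendsto (fun b => h (b - t) / (b - t)) atTop (𝓝 L) := by
    simpa only [Function.comp_def, id, sub_eq_add_neg] using
      hlim.comp (tendsto_atTop_add_const_right _ (-t) tendsto_id)
  have hscale : Tendsto (fun b => (b - t) / b) atTop (𝓝 1) := by
    have := (tendsto_inv_atTop_zero.const_mul t).const_sub 1
    rw [mul_zero, sub_zero] at this
    refine this.congr' ?_
    filter_upwards [eventually_gt_atTop 0] with b hb
    field_simp
  have := hratio.mul hscale
  rw [mul_one] at this
  refine this.congr' ?_
  filter_upwards [eventually_gt_atTop t] with b hb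
  rw [div_mul_div_cancel₀ (sub_ne_zero.2 hb.ne')]

theorem tendsto_intervalIntegral_mul_comp_sub_div_atTop {u h : ℝ → ℝ} {A L : ℝ}
    (hu : IntegrableOn u (Ioi 0)) (hh : Measurable h) (hbound : ∀ x, |h x| ≤ A * (1 + |x|))
    (hlim : Tendsto (fun x => h x / x) atTop (𝓝 L)) (a : ℝ) :
    Tendsto (fun b => (∫ t in 0..(b - a), u t * h (b - t)) / b) atTop
      (𝓝 ((∫ t in Ioi 0, u t) * L)) := by
  set F : ℝ → ℝ → ℝ := fun b => (Ioc 0 (b - a)).indicator fun t => u t * h (b - t) / b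
  have hF : ∀ᶠ b in atTop, ∫ t in Ioi 0, F b t = (∫ t in 0..(b - a), u t * h (b - t)) / b := by
    filter_upwards [eventually_ge_atTop a] with b hb
    rw [integral_indicator measurableSet_Ioc, Measure.restrict_restrict measurableSet_Ioc,
      inter_eq_left.2 Ioc_subset_Ioi_self, intervalIntegral.integral_of_le (sub_nonneg.2 hb),
      integral_div]
  have hA : 0 ≤ A := by simpa using (abs_nonneg _).trans (hbound 0)
  have hmeas (b : ℝ) : AEStronglyMeasurable (F b) (volume.restrict (Ioi 0)) :=
    ((hu.aemeasurable.mul (hh.comp (measurable_const.sub measurable_id)).aemeasurable).div_const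
      b).aestronglyMeasurable.indicator measurableSet_Ioc
  have hdom : ∀ᶠ b in atTop, ∀ᵐ t ∂volume.restrict (Ioi 0), ‖F b t‖ ≤ |u t| * (A * (2 + |a|)) := by
    filter_upwards [eventually_ge_atTop 1] with b hb
    refine ae_of_all _ fun t => ?_
    have hb0 : 0 < b := by linarith
    simp only [F]
    by_cases ht : t ∈ Ioc 0 (b - a)
    · have hbt : |b - t| ≤ b + |a| :=
        abs_le.2 ⟨by linarith [neg_abs_le a, ht.2], by linarith [ht.1, abs_nonneg a]⟩
      have hh_le : |h (b - t)| ≤ A * (2 + |a|) * b :=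
        calc |h (b - t)| ≤ A * (1 + |b - t|) := hbound _
          _ ≤ A * (1 + (b + |a|)) := by gcongr
          _ ≤ A * (2 + |a|) * b := by
            nlinarith [mul_nonneg hA (mul_nonneg (by positivity : 0 ≤ 1 + |a|) (sub_nonneg.2 hb))]
      rw [indicator_of_mem ht, Real.norm_eq_abs, abs_div, abs_mul, abs_of_pos hb0,
        div_le_iff₀ hb0, mul_assoc]
      exact mul_le_mul_of_nonneg_left hh_le (abs_nonneg _)
    · rw [indicator_of_notMem ht, norm_zero]
      positivity
  have hpointwise :
      ∀ᵐ t ∂volume.restrict (Ioi 0), Tendsto (fun b => F b t) atTop (𝓝 (u t * L)) := by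
    refine (ae_restrict_iff' measurableSet_Ioi).2 (ae_of_all _ fun t ht => ?_)
    refine ((tendsto_comp_sub_div_atTop hlim t).const_mul (u t)).congr' ?_
    filter_upwards [eventually_ge_atTop (t + a)] with b hb
    simp only [F]
    rw [indicator_of_mem (show t ∈ Ioc 0 (b - a) from ⟨ht, by linarith⟩), mul_div_assoc]
  rw [← integral_mul_const]
  exact (tendsto_integral_filter_of_dominated_convergence _ (.of_forall hmeas) hdom
    (hu.norm.mul_const _) hpointwise).congr' hF

theorem Gam_quadCostDeriv_eq {W uhat : ℝ → ℝ} {Φ κ αm αp c CU CD a b : ℝ} (hΦ : 0 < Φ)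
    (hu : IntegrableOn uhat (Ici 0)) (hW : ∀ y, 0 ≤ y → W y = κ * exp (Φ * y) - uhat y)
    (hΨ : Psi Φ (quadCostDeriv αm αp c) a = 0) (hab : a ≤ b) (hb : 0 ≤ b) :
    Gam W (quadCostDeriv αm αp c) CU CD a b
      = CD + CU - κ * (2 * αp / Φ * b + (2 * αp / Φ ^ 2 + c / Φ))
        - ∫ t in 0..(b - a), uhat t * quadCostDeriv αm αp c (b - t) := by
  rw [Gam_eq_of_decomposition continuous_quadCostDeriv hu hW hab,
    intervalIntegral_exp_neg_mul_eq_neg_integral_Ioi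
      (integrableOn_exp_neg_mul_quadCostDeriv hΦ a) hΨ hab,
    integral_Ioi_exp_neg_mul_quadCostDeriv hΦ hb]
  have hexp : exp (Φ * b) * exp (-(Φ * b)) = 1 := by rw [← exp_add, add_neg_cancel, exp_zero]
  linear_combination (-(κ * (2 * αp / Φ * b + (2 * αp / Φ ^ 2 + c / Φ)))) * hexp

theorem tendsto_atBot_of_tendsto_div_atTop {f : ℝ → ℝ} {L : ℝ} (hL : L < 0)
    (h : Tendsto (fun b => f b / b) atTop (𝓝 L)) : Tendsto f atTop atBot :=
  (h.neg_mul_atTop hL tendsto_id).congr' <| by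
    filter_upwards [eventually_ne_atTop 0] with b hb using div_mul_cancel₀ _ hb

theorem stmt15_general
    (Φ q κ αm αp CU CD : ℝ)
    (hΦ : 0 < Φ) (hq : 0 < q) (hαp : 0 < αp)
    -- the derivative of `f̃(x) = f_Q(x) + q C_U x` for the quadratic running cost `f_Q`
    (g : ℝ → ℝ)
    (hg : ∀ x : ℝ, g x = 2 * ((if x < 0 then αm else αp) * x) + q * CU)
    -- the scale-function decomposition `W(y) = κ e^{Φy} - û(y)`
    (uhat : ℝ → ℝ)
    (h_int : IntegrableOn uhat (Set.Ici 0))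
    (h_val : ∫ y in Set.Ici 0, uhat y = 1 / q - κ / Φ)
    (W : ℝ → ℝ)
    (hW : ∀ y, 0 ≤ y → W y = κ * Real.exp (Φ * y) - uhat y)
    -- `a̲` is the unique zero of `Ψ`
    (aund : ℝ) (h_aund : Psi Φ g aund = 0) :
    Tendsto (fun b => Gam W g CU CD aund b / b) atTop (nhds (-(2 * αp) / q)) ∧
    Tendsto (fun b => Gam W g CU CD aund b) atTop atBot := by
  obtain rfl : g = quadCostDeriv αm αp (q * CU) := funext hg
  have hJ := tendsto_intervalIntegral_mul_comp_sub_div_atTop (h := quadCostDeriv αm αp (q * CU))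
    (h_int.mono_set Ioi_subset_Ici_self) continuous_quadCostDeriv.measurable
    abs_quadCostDeriv_le tendsto_quadCostDeriv_div_atTop aund
  rw [← integral_Ici_eq_integral_Ioi, h_val] at hJ
  set D := CD + CU - κ * (2 * αp / Φ ^ 2 + q * CU / Φ)
  have hlim := ((tendsto_const_nhds (x := D)).div_atTop tendsto_id).sub_const (κ * (2 * αp / Φ))
    |>.sub hJ
  rw [show 0 - κ * (2 * αp / Φ) - (1 / q - κ / Φ) * (2 * αp) = -(2 * αp) / q by
    field_simp; ring] at hlim
  have hratio : Tendsto (fun b => Gam W (quadCostDeriv αm αp (q * CU)) CU CD aund b / b) atTop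
      (𝓝 (-(2 * αp) / q)) := by
    refine hlim.congr' ?_
    filter_upwards [eventually_ge_atTop (max aund 0), eventually_gt_atTop 0] with b hb hb0
    rw [Gam_quadCostDeriv_eq hΦ h_int hW h_aund (le_of_max_le_left hb) (le_of_max_le_right hb)]
    simp only [D, id]
    field_simp
    ring
  exact ⟨hratio, tendsto_atBot_of_tendsto_div_atTop (div_neg_of_neg_of_pos (by linarith) hq) hratio⟩

/-- Quadratic running cost: `Γ(a̲, b)/b → -2α⁺/q`, so `Γ(a̲, b) → -∞` as `b → ∞`
(Case 1 of the paper always holds). -/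
theorem stmt15
    (Φ q κ αm αp CU CD : ℝ)
    (hΦ : 0 < Φ) (hq : 0 < q) (hαm : 0 < αm) (hαp : 0 < αp)
    (hC : 0 < CU + CD)
    -- the derivative of `f̃(x) = f_Q(x) + q C_U x` for the quadratic running cost `f_Q`
    (g : ℝ → ℝ)
    (hg : ∀ x : ℝ, g x = 2 * ((if x < 0 then αm else αp) * x) + q * CU)
    -- the scale-function decomposition `W(y) = κ e^{Φy} - û(y)`
    (uhat : ℝ → ℝ)
    (h_int : IntegrableOn uhat (Set.Ici 0))
    (h_val : ∫ y in Set.Ici 0, uhat y = 1 / q - κ / Φ)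
    (hκ : 0 < κ)
    (W : ℝ → ℝ)
    (hW : ∀ y, 0 ≤ y → W y = κ * Real.exp (Φ * y) - uhat y)
    (hW_neg : ∀ y, y < 0 → W y = 0)
    -- `a̲` is the unique zero of `Ψ`
    (aund : ℝ) (h_aund : Psi Φ g aund = 0) :
    Tendsto (fun b => Gam W g CU CD aund b / b) atTop (nhds (-(2 * αp) / q)) ∧
    Tendsto (fun b => Gam W g CU CD aund b) atTop atBot :=
  stmt15_general Φ q κ αm αp CU CD hΦ hq hαp g hg uhat h_int h_val W hW aund h_aund
end

section
/- Set a̲ := Φ^{−1} log( (α⁻ − q C_U)/(α⁻ + α⁺) ) < 0 and, for b > a̲, define γ(a̲, b) := (q C_U − α⁻) W(b − a̲) + (α⁻ + α⁺) W(b). Then γ(a̲, b) ≤ 0 for every b > a̲. -/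
/-! Monotonicity of `x ↦ e^{-Φx} W(x)` gives `W(b) ≤ e^{Φa} W(b - a)` for `a ≤ 0`, and `a̲` is
chosen exactly so that `e^{Φa̲} = (α⁻ - q C_U)/(α⁻ + α⁺)`; multiplying out gives `γ(a̲, b) ≤ 0`. -/

open MeasureTheory Filter Set

lemma le_exp_mul_sub_mul_of_monotoneOn {Φ : ℝ} {W : ℝ → ℝ}
    (hW : MonotoneOn (fun x => Real.exp (-(Φ * x)) * W x) (Set.Ici 0))
    {x y : ℝ} (hx : 0 ≤ x) (hxy : x ≤ y) :
    W x ≤ Real.exp (Φ * (x - y)) * W y := by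
  have h : Real.exp (-(Φ * x)) * W x ≤ Real.exp (-(Φ * y)) * W y :=
    hW hx (hx.trans hxy) hxy
  calc W x = Real.exp (Φ * x) * (Real.exp (-(Φ * x)) * W x) := by
        rw [← mul_assoc, ← Real.exp_add, add_neg_cancel, Real.exp_zero, one_mul]
    _ ≤ Real.exp (Φ * x) * (Real.exp (-(Φ * y)) * W y) := by gcongr
    _ = Real.exp (Φ * (x - y)) * W y := by
        rw [← mul_assoc, ← Real.exp_add, mul_sub, sub_eq_add_neg]

lemma le_exp_mul_apply_sub {Φ a b : ℝ} {W : ℝ → ℝ}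
    (hW_neg : ∀ x, x < 0 → W x = 0) (hW_nonneg : ∀ x, 0 ≤ x → 0 ≤ W x)
    (hW_exp : MonotoneOn (fun x => Real.exp (-(Φ * x)) * W x) (Set.Ici 0))
    (ha : a ≤ 0) (hab : a ≤ b) :
    W b ≤ Real.exp (Φ * a) * W (b - a) := by
  rcases lt_or_ge b 0 with hb | hb
  · rw [hW_neg b hb]
    exact mul_nonneg (Real.exp_pos _).le (hW_nonneg _ (sub_nonneg.2 hab))
  · simpa using le_exp_mul_sub_mul_of_monotoneOn hW_exp hb (by linarith : b ≤ b - a)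

theorem stmt17_general
    (Φ q αm αp CU : ℝ)
    (hΦ : 0 < Φ)
    (h₁ : 0 < q * CU + αp) (h₂ : q * CU - αm < 0)
    (W : ℝ → ℝ)
    (hW_neg : ∀ x, x < 0 → W x = 0)
    (hW_nonneg : ∀ x, 0 ≤ x → 0 ≤ W x)
    (hW_exp : MonotoneOn (fun x => Real.exp (-(Φ * x)) * W x) (Set.Ici 0))
    (aund : ℝ) (haund : aund = Φ⁻¹ * Real.log ((αm - q * CU) / (αm + αp))) :
    aund < 0 ∧
    ∀ b : ℝ, aund < b →
      (q * CU - αm) * W (b - aund) + (αm + αp) * W b ≤ 0 := by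
  have hden : 0 < αm + αp := by linarith
  have hρ : 0 < (αm - q * CU) / (αm + αp) := div_pos (by linarith) hden
  have hρ1 : (αm - q * CU) / (αm + αp) < 1 := (div_lt_one hden).2 (by linarith)
  have haund_neg : aund < 0 :=
    haund ▸ mul_neg_of_pos_of_neg (inv_pos.2 hΦ) (Real.log_neg hρ hρ1)
  have hexp : Real.exp (Φ * aund) = (αm - q * CU) / (αm + αp) := by
    rw [haund, ← mul_assoc, mul_inv_cancel₀ hΦ.ne', one_mul, Real.exp_log hρ]
  refine ⟨haund_neg, fun b hb => ?_⟩
  have hWb := le_exp_mul_apply_sub hW_neg hW_nonneg hW_exp haund_neg.le hb.le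
  rw [hexp, div_mul_eq_mul_div, le_div_iff₀ hden] at hWb
  linarith

/-- Linear running cost: with `a̲ = Φ⁻¹ log((α⁻ - q C_U)/(α⁻ + α⁺)) < 0`,
`γ(a̲, b) = (q C_U - α⁻) W(b - a̲) + (α⁻ + α⁺) W(b) ≤ 0` for every `b > a̲`. -/
theorem stmt17
    (Φ q αm αp CU : ℝ)
    (hΦ : 0 < Φ) (hq : 0 < q) (hαm : 0 < αm) (hαp : 0 < αp)
    (h₁ : 0 < q * CU + αp) (h₂ : q * CU - αm < 0)
    (W : ℝ → ℝ)
    (hW_neg : ∀ x, x < 0 → W x = 0)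
    (hW_nonneg : ∀ x, 0 ≤ x → 0 ≤ W x)
    (hW_exp : MonotoneOn (fun x => Real.exp (-(Φ * x)) * W x) (Set.Ici 0))
    (aund : ℝ) (haund : aund = Φ⁻¹ * Real.log ((αm - q * CU) / (αm + αp))) :
    aund < 0 ∧
    ∀ b : ℝ, aund < b →
      (q * CU - αm) * W (b - aund) + (αm + αp) * W b ≤ 0 :=
  stmt17_general Φ q αm αp CU hΦ h₁ h₂ W hW_neg hW_nonneg hW_exp aund haund
end

section
/- Set a̲ := Φ^{−1} log( (α⁻ − q C_U)/(α⁻ + α⁺) ) < 0 and, for b ≥ 0, define Γ(a̲, b) := C_U + C_D + (q C_U − α⁻) W̄(b − a̲) + (α⁻ + α⁺) W̄(b). If additionally x ↦ e^{−Φx} W(x) is nondecreasing on [0, ∞), then b ↦ Γ(a̲, b) is nonincreasing on [0, ∞) and lim_{b→∞} Γ(a̲, b) = C_D − α⁺/q. Consequently Γ(a̲, b) < 0 for some b ≥ 0 if and only if C_D < α⁺/q (Case 1 of the paper), while Γ(a̲, b) ≥ 0 for all b ≥ 0 if and only if C_D ≥ α⁺/q (Case 2 of the paper). -/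
open MeasureTheory Filter Set Topology

/-!
Since `a̲ < 0` is chosen so that `(α⁻ - q C_U) = (α⁻ + α⁺) e^{Φ a̲}`, one has
`Γ(a̲, b) = C_U + C_D - (α⁻ + α⁺) (e^{Φ a̲} W̄(b - a̲) - W̄(b))`. The derivative in `b` of the
bracket is `e^{Φ a̲} W(b - a̲) - W(b) ≥ 0`, precisely because `e^{-Φx} W(x)` is nondecreasing, so
`Γ(a̲, ·)` is nonincreasing. In the bracket the exponential parts of `W̄ = κ(e^{Φ·} - 1)/Φ - ∫ û`
cancel, leaving only `û`-integrals, which converge; this gives the limit `C_D - α⁺/q`. A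
nonincreasing function dips below `0` exactly when its limit is negative.
-/

noncomputable section

def shiftedIntegralGap (W : ℝ → ℝ) (Φ a b : ℝ) : ℝ :=
  Real.exp (Φ * a) * (∫ y in (0:ℝ)..(b - a), W y) - ∫ y in (0:ℝ)..b, W y

section Monotonicity

variable {Φ a : ℝ} {W : ℝ → ℝ}

theorem le_exp_mul_of_monotoneOn_exp_neg_mul
    (hW : MonotoneOn (fun x => Real.exp (-(Φ * x)) * W x) (Ici 0)) (ha : a ≤ 0) {t : ℝ}
    (ht : 0 ≤ t) : W t ≤ Real.exp (Φ * a) * W (t - a) := by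
  have hm := hW (mem_Ici.mpr ht) (mem_Ici.mpr (by linarith)) (by linarith : t ≤ t - a)
  calc W t = Real.exp (Φ * t) * (Real.exp (-(Φ * t)) * W t) := by
        rw [← mul_assoc, ← Real.exp_add, add_neg_cancel, Real.exp_zero, one_mul]
    _ ≤ Real.exp (Φ * t) * (Real.exp (-(Φ * (t - a))) * W (t - a)) := mul_le_mul_of_nonneg_left hm (Real.exp_pos _).le
    _ = Real.exp (Φ * a) * W (t - a) := by rw [← mul_assoc, ← Real.exp_add]; ring_nf

theorem monotoneOn_shiftedIntegralGap (hint : ∀ c d, IntervalIntegrable W volume c d)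
    (hW : MonotoneOn (fun x => Real.exp (-(Φ * x)) * W x) (Ici 0)) (ha : a ≤ 0) :
    MonotoneOn (shiftedIntegralGap W Φ a) (Ici 0) := by
  intro x hx y _ hxy
  have hshift_int : IntervalIntegrable (fun t => W (t - a)) volume x y := by
    simpa using (hint (x - a) (y - a)).comp_sub_right a
  have hle : ∫ t in x..y, W t ≤ ∫ t in x..y, Real.exp (Φ * a) * W (t - a) :=
    intervalIntegral.integral_mono_on hxy (hint x y) (hshift_int.const_mul _) fun t ht =>
      le_exp_mul_of_monotoneOn_exp_neg_mul hW ha (le_trans hx ht.1)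
  rw [intervalIntegral.integral_const_mul, intervalIntegral.integral_comp_sub_right,
    ← intervalIntegral.integral_interval_sub_left (hint 0 y) (hint 0 x),
    ← intervalIntegral.integral_interval_sub_left (hint 0 (y - a)) (hint 0 (x - a))] at hle
  simp only [shiftedIntegralGap]
  linarith

end Monotonicity

section ExpDecomposition

variable {Φ κ a : ℝ} {W uhat : ℝ → ℝ}

theorem intervalIntegrable_of_eq_exp_sub (h_int : IntegrableOn uhat (Ici 0))
    (hW : ∀ y, 0 ≤ y → W y = κ * Real.exp (Φ * y) - uhat y) (hW_neg : ∀ y, y < 0 → W y = 0)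
    (c d : ℝ) : IntervalIntegrable W volume c d := by
  have hW_ind : W = (Ici 0).indicator fun y => κ * Real.exp (Φ * y) - uhat y := by
    funext y
    by_cases hy : 0 ≤ y
    · simp [hy, hW y hy]
    · simp [hy, hW_neg y (lt_of_not_ge hy)]
  rw [intervalIntegrable_iff, hW_ind, IntegrableOn, integrable_indicator_iff measurableSet_Ici,
    IntegrableOn, Measure.restrict_restrict measurableSet_Ici]
  refine Integrable.sub ?_ (h_int.mono_set inter_subset_left)
  exact ((by fun_prop : Continuous fun y => κ * Real.exp (Φ * y)).integrableOn_uIoc).mono_set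
    inter_subset_right

theorem intervalIntegral_eq_exp_sub (hΦ : Φ ≠ 0) (h_int : IntegrableOn uhat (Ici 0))
    (hW : ∀ y, 0 ≤ y → W y = κ * Real.exp (Φ * y) - uhat y) {b : ℝ} (hb : 0 ≤ b) :
    ∫ y in (0:ℝ)..b, W y = κ / Φ * (Real.exp (Φ * b) - 1) - ∫ y in (0:ℝ)..b, uhat y := by
  have huhat : IntervalIntegrable uhat volume 0 b := by
    rw [intervalIntegrable_iff, uIoc_of_le hb]
    exact h_int.mono_set fun y hy => le_of_lt hy.1
  rw [intervalIntegral.integral_congr (g := fun y => κ * Real.exp (Φ * y) - uhat y)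
      fun y hy => hW y (by rw [uIcc_of_le hb] at hy; exact hy.1),
    intervalIntegral.integral_sub
      ((by fun_prop : Continuous fun y => κ * Real.exp (Φ * y)).intervalIntegrable 0 b) huhat, intervalIntegral.integral_const_mul,
    intervalIntegral.integral_comp_mul_left (fun y => Real.exp y) hΦ, integral_exp]
  simp only [smul_eq_mul, mul_zero, Real.exp_zero]
  field_simp

theorem shiftedIntegralGap_eq (hΦ : Φ ≠ 0) (h_int : IntegrableOn uhat (Ici 0))
    (hW : ∀ y, 0 ≤ y → W y = κ * Real.exp (Φ * y) - uhat y) (ha : a ≤ 0) {b : ℝ} (hb : 0 ≤ b) :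
    shiftedIntegralGap W Φ a b = (1 - Real.exp (Φ * a)) * (κ / Φ)
      - Real.exp (Φ * a) * (∫ y in (0:ℝ)..(b - a), uhat y) + ∫ y in (0:ℝ)..b, uhat y := by
  rw [shiftedIntegralGap, intervalIntegral_eq_exp_sub hΦ h_int hW (by linarith),
    intervalIntegral_eq_exp_sub hΦ h_int hW hb, mul_sub Φ b a, Real.exp_sub]
  field_simp
  ring

theorem tendsto_shiftedIntegralGap (hΦ : Φ ≠ 0) (h_int : IntegrableOn uhat (Ici 0))
    (hW : ∀ y, 0 ≤ y → W y = κ * Real.exp (Φ * y) - uhat y) (ha : a ≤ 0) :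
    Tendsto (shiftedIntegralGap W Φ a) atTop
      (𝓝 ((1 - Real.exp (Φ * a)) * (κ / Φ + ∫ y in Ici 0, uhat y))) := by
  have hU : Tendsto (fun b => ∫ y in (0:ℝ)..b, uhat y) atTop (𝓝 (∫ y in Ici 0, uhat y)) := by
    rw [integral_Ici_eq_integral_Ioi]
    exact intervalIntegral_tendsto_integral_Ioi 0 (h_int.mono_set Ioi_subset_Ici_self) tendsto_id
  have hU_shift := hU.comp (tendsto_atTop_add_const_right atTop (-a) tendsto_id)
  have hlim := (hU_shift.const_mul (Real.exp (Φ * a))).const_sub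
    ((1 - Real.exp (Φ * a)) * (κ / Φ)) |>.add hU
  rw [show (1 - Real.exp (Φ * a)) * (κ / Φ + ∫ y in Ici 0, uhat y) =
      (1 - Real.exp (Φ * a)) * (κ / Φ) - Real.exp (Φ * a) * (∫ y in Ici 0, uhat y)
        + ∫ y in Ici 0, uhat y by ring]
  refine hlim.congr' ?_
  filter_upwards [eventually_ge_atTop 0] with b hb
  simp only [Function.comp_apply, id, ← sub_eq_add_neg]
  exact (shiftedIntegralGap_eq hΦ h_int hW ha hb).symm

end ExpDecomposition

section SignOfLimit

variable {f : ℝ → ℝ} {L : ℝ}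

theorem exists_nonneg_lt_zero_iff_of_antitoneOn (hf : AntitoneOn f (Ici 0))
    (hL : Tendsto f atTop (𝓝 L)) : (∃ b, 0 ≤ b ∧ f b < 0) ↔ L < 0 := by
  constructor
  · rintro ⟨b, hb, hfb⟩
    refine lt_of_le_of_lt (le_of_tendsto hL ?_) hfb
    filter_upwards [eventually_ge_atTop b] with c hc
    exact hf hb (le_trans hb hc) hc
  · intro hL0
    obtain ⟨b, hfb, hb⟩ := ((hL.eventually (eventually_lt_nhds hL0)).and
      (eventually_ge_atTop 0)).exists
    exact ⟨b, hb, hfb⟩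

theorem forall_nonneg_zero_le_iff_of_antitoneOn (hf : AntitoneOn f (Ici 0))
    (hL : Tendsto f atTop (𝓝 L)) : (∀ b, 0 ≤ b → 0 ≤ f b) ↔ 0 ≤ L := by
  rw [← not_iff_not, not_le, ← exists_nonneg_lt_zero_iff_of_antitoneOn hf hL]
  simp only [not_forall, not_le, exists_prop]

end SignOfLimit

theorem stmt18_general
    (Φ q κ αm αp CU CD : ℝ)
    (hΦ : 0 < Φ) (hq : 0 < q)
    (h₁ : 0 < q * CU + αp) (h₂ : q * CU - αm < 0)
    -- the scale-function decomposition `W(y) = κ e^{Φy} - û(y)`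
    (uhat : ℝ → ℝ)
    (h_int : IntegrableOn uhat (Set.Ici 0))
    (h_val : ∫ y in Set.Ici 0, uhat y = 1 / q - κ / Φ)
    (W : ℝ → ℝ)
    (hW : ∀ y, 0 ≤ y → W y = κ * Real.exp (Φ * y) - uhat y)
    (hW_neg : ∀ y, y < 0 → W y = 0)
    (hW_exp : MonotoneOn (fun x => Real.exp (-(Φ * x)) * W x) (Set.Ici 0))
    (aund : ℝ) (haund : aund = Φ⁻¹ * Real.log ((αm - q * CU) / (αm + αp)))
    -- `Γ(a̲, ·)` for the linear running cost, written via `W̄(x) = ∫_0^x W(y) dy`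
    (Γ : ℝ → ℝ)
    (hΓ : ∀ b : ℝ, Γ b = CU + CD + (q * CU - αm) * (∫ y in (0:ℝ)..(b - aund), W y) +
        (αm + αp) * ∫ y in (0:ℝ)..b, W y) :
    aund < 0 ∧
    AntitoneOn Γ (Set.Ici 0) ∧
    Tendsto Γ atTop (nhds (CD - αp / q)) ∧
    ((∃ b : ℝ, 0 ≤ b ∧ Γ b < 0) ↔ CD < αp / q) ∧
    ((∀ b : ℝ, 0 ≤ b → 0 ≤ Γ b) ↔ αp / q ≤ CD) := by
  have hden : 0 < αm + αp := by linarith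
  have hratio_pos : 0 < (αm - q * CU) / (αm + αp) := div_pos (by linarith) hden
  have ha : aund < 0 := haund ▸ mul_neg_of_pos_of_neg (inv_pos.mpr hΦ)
    (Real.log_neg hratio_pos (by rw [div_lt_one hden]; linarith))
  have hkey : (αm + αp) * Real.exp (Φ * aund) = αm - q * CU := by
    rw [haund, ← mul_assoc, mul_inv_cancel₀ hΦ.ne', one_mul, Real.exp_log hratio_pos]
    field_simp
  have hΓ_gap : Γ = fun b => CU + CD - (αm + αp) * shiftedIntegralGap W Φ aund b := by
    funext b
    rw [hΓ, shiftedIntegralGap]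
    linear_combination (∫ y in (0:ℝ)..(b - aund), W y) * hkey
  have hanti : AntitoneOn Γ (Ici 0) := fun x hx y hy hxy => by
    have hgap := monotoneOn_shiftedIntegralGap
      (intervalIntegrable_of_eq_exp_sub h_int hW hW_neg) hW_exp ha.le hx hy hxy
    rw [hΓ_gap]
    dsimp only
    gcongr
  have hlim : Tendsto Γ atTop (𝓝 (CD - αp / q)) := by
    rw [hΓ_gap]
    convert ((tendsto_shiftedIntegralGap hΦ.ne' h_int hW ha.le).const_mul (αm + αp)).const_sub
      (CU + CD) using 2
    rw [h_val, add_sub_cancel, mul_one_div, ← mul_div_assoc, mul_sub, mul_one, hkey]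
    field_simp
    ring
  refine ⟨ha, hanti, hlim, ?_, ?_⟩
  · rw [exists_nonneg_lt_zero_iff_of_antitoneOn hanti hlim, sub_neg]
  · rw [forall_nonneg_zero_le_iff_of_antitoneOn hanti hlim, sub_nonneg]

/-- Linear running cost: `b ↦ Γ(a̲, b)` is nonincreasing on `[0, ∞)` with limit
`C_D - α⁺/q`; hence `Γ(a̲, ·)` goes below `0` iff `C_D < α⁺/q` (Case 1) and stays
nonnegative iff `C_D ≥ α⁺/q` (Case 2). -/
theorem stmt18
    (Φ q κ αm αp CU CD : ℝ)
    (hΦ : 0 < Φ) (hq : 0 < q) (hκ : 0 < κ) (hαm : 0 < αm) (hαp : 0 < αp)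
    (h₁ : 0 < q * CU + αp) (h₂ : q * CU - αm < 0)
    (hC : 0 < CU + CD)
    -- the scale-function decomposition `W(y) = κ e^{Φy} - û(y)`
    (uhat : ℝ → ℝ)
    (h_int : IntegrableOn uhat (Set.Ici 0))
    (h_val : ∫ y in Set.Ici 0, uhat y = 1 / q - κ / Φ)
    (W : ℝ → ℝ)
    (hW : ∀ y, 0 ≤ y → W y = κ * Real.exp (Φ * y) - uhat y)
    (hW_neg : ∀ y, y < 0 → W y = 0)
    (hW_exp : MonotoneOn (fun x => Real.exp (-(Φ * x)) * W x) (Set.Ici 0))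
    (aund : ℝ) (haund : aund = Φ⁻¹ * Real.log ((αm - q * CU) / (αm + αp)))
    -- `Γ(a̲, ·)` for the linear running cost, written via `W̄(x) = ∫_0^x W(y) dy`
    (Γ : ℝ → ℝ)
    (hΓ : ∀ b : ℝ, Γ b = CU + CD + (q * CU - αm) * (∫ y in (0:ℝ)..(b - aund), W y) +
        (αm + αp) * ∫ y in (0:ℝ)..b, W y) :
    aund < 0 ∧
    AntitoneOn Γ (Set.Ici 0) ∧
    Tendsto Γ atTop (nhds (CD - αp / q)) ∧
    ((∃ b : ℝ, 0 ≤ b ∧ Γ b < 0) ↔ CD < αp / q) ∧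
    ((∀ b : ℝ, 0 ≤ b → 0 ≤ Γ b) ↔ αp / q ≤ CD) :=
  stmt18_general Φ q κ αm αp CU CD hΦ hq h₁ h₂ uhat h_int h_val W hW hW_neg hW_exp aund haund Γ hΓ
end
end
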